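/- arXiv:1004.0474 — 8 statements merged into one kernel-verified Lean document; each statement's English description precedes it below -/
import Mathlib

section
/- Fix an integer n ≥ 1 and a strictly decreasing integer tuple y = (y_1 > y_2 > … > y_{n+1}). Then the sum, over all strictly decreasing integer tuples x = (x_1 > … > x_n) satisfying y_{i+1} ≤ x_i ≤ y_i for i = 1,…,n, of Δ(x) · 2^{−#{i ∈ {1,…,n} : x_i = y_i or x_i = y_{i+1}}}, equals Δ(y) / n!. -/
/-!
With `D_k(s) = ((s + 1)^k - (s - 1)^k) / 2`, which has degree `k - 1` and leading coefficient
`k`, we have `n! Δ(x) = det (D_{j+1}(-x_i))`. The weight `2^{-#…}` is the trapezoid rule, which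
integrates `D_k` exactly against the monic `P_k(s) = s^k / 2 + ((s + 1)^k + (s - 1)^k) / 4`:
`(D_k(s) + D_k(s + 1)) / 2 = P_k(s + 1) - P_k(s)`. Since the determinant is multilinear in its
rows, the weighted sum of `n! Δ(x)` over all interlacing `x` is `det (P_{j+1}(-y_{i+1}) -
P_{j+1}(-y_i))`, and subtracting consecutive rows of `det (P_j(-y_i))`, whose first column is
`1`, identifies it with the Vandermonde determinant `Δ(y)`. Interlacing tuples are weakly
decreasing, so those that are not strictly decreasing have `Δ(x) = 0` and may be added freely.
-/

open Finset Polynomial Matrix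

section Determinants

variable {R : Type*} [CommRing R]

theorem det_of_sum_eq_sum_det {ι α : Type*} [Fintype ι] [DecidableEq ι] (S : ι → Finset α)
    (g : ι → α → ι → R) :
    det (of fun i j => ∑ t ∈ S i, g i t j) =
      ∑ r : (i : ι) → S i, det (of fun i j => g i (r i) j) := by
  have hrows : (of fun i j => ∑ t ∈ S i, g i t j) = fun i => ∑ t : S i, g i t := by
    ext i j
    simp only [of_apply, Finset.sum_apply]
    exact (sum_coe_sort (S i) fun t => g i t j).symm
  rw [hrows]
  exact detRowAlternating.map_sum fun i (t : S i) => g i t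

theorem det_eq_det_succ_sub_castSucc_of_col_zero {n : ℕ}
    (A : Matrix (Fin (n + 1)) (Fin (n + 1)) R) (hA : ∀ i, A i 0 = 1) :
    det A = det (of fun i j : Fin n => A i.succ j.succ - A i.castSucc j.succ) := by
  rw [det_eq_of_forall_row_eq_smul_add_pred (A := A) (B := of fun (i j : Fin (n + 1)) =>
      Fin.cases (motive := fun _ => R) (A 0 j) (fun k : Fin n => A k.succ j - A k.castSucc j) i)
      (fun _ => 1) (fun _ => rfl) (fun i j => by simp), det_succ_column_zero, Fin.sum_univ_succ]
  simp only [Fin.coe_ofNat_eq_mod, Nat.zero_mod, pow_zero, of_apply, hA, sub_self,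
    Fin.cases_zero, mul_one, Fin.succAbove_zero, one_mul, Fin.val_succ, Fin.cases_succ, mul_zero,
    zero_mul, sum_const_zero, add_zero]
  rfl

theorem det_of_eval_eq_prod_coeff_mul_det_vandermonde {m : ℕ} (v : Fin m → R)
    (p : Fin m → R[X]) (hp : ∀ j, (p j).natDegree ≤ j) :
    det (of fun i j => (p j).eval (v i)) = (∏ j, (p j).coeff j) * det (vandermonde v) := by
  rw [eval_matrixOfPolynomials_eq_vandermonde_mul_matrixOfPolynomials v p hp, det_mul,
    det_of_isUpperTriangular (matrixOfPolynomials_blockTriangular p hp), mul_comm]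
  rfl

theorem prod_ite_lt_sub_eq_det_vandermonde_neg {m : ℕ} (v : Fin m → R) :
    (∏ i, ∏ j, if i < j then v i - v j else 1) = det (vandermonde (-v)) := by
  rw [det_vandermonde]
  refine prod_congr rfl fun i _ => ?_
  rw [← prod_filter, filter_lt_eq_Ioi]
  exact prod_congr rfl fun j _ => by simp [sub_eq_neg_add, add_comm]

theorem ne_of_prod_ite_lt_sub_ne_zero {m : ℕ} {v : Fin m → R}
    (h : (∏ i, ∏ j, if i < j then v i - v j else 1) ≠ 0) {i j : Fin m} (hij : i < j) :
    v i ≠ v j := fun heq =>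
  h <| prod_eq_zero (mem_univ i) <| prod_eq_zero (mem_univ j) <| by simp [hij, heq]

end Determinants

section TrapezoidRule

variable {K : Type*} [Field K] [CharZero K]

def trapezoidWeight (a b t : ℤ) : K := if t = b ∨ t = a then 2⁻¹ else 1

variable {f H : ℤ → K}

theorem sum_Icc_sub_half_endpoints (hfH : ∀ t, (f t + f (t + 1)) / 2 = H (t + 1) - H t)
    {a b : ℤ} (hab : a ≤ b) :
    ∑ t ∈ Icc a b, f t - (f a + f b) / 2 = H b - H a := by
  induction b, hab using Int.leInduction with
  | base => simp
  | succ b hab ih =>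
    rw [← insert_Icc_right_eq_Icc_add_one (by omega), sum_insert (by simp)]
    linear_combination ih + hfH b

theorem sum_Icc_trapezoidWeight_mul (hfH : ∀ t, (f t + f (t + 1)) / 2 = H (t + 1) - H t)
    {a b : ℤ} (hab : a < b) :
    ∑ t ∈ Icc a b, trapezoidWeight a b t * f t = H b - H a := by
  have hweight : ∀ t, trapezoidWeight a b t * f t =
      f t - (if t = a then f a / 2 else 0) - (if t = b then f b / 2 else 0) := by
    intro t
    rcases eq_or_ne t a with rfl | hta
    · simp only [trapezoidWeight, hab.ne, or_true, ↓reduceIte, sub_zero]; ring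
    rcases eq_or_ne t b with rfl | htb
    · simp only [trapezoidWeight, hta, or_false, ↓reduceIte, sub_zero]; ring
    simp [trapezoidWeight, hta, htb]
  simp_rw [hweight, sum_sub_distrib, sum_ite_eq', mem_Icc, le_refl, hab.le, and_self, if_true]
  rw [← sum_Icc_sub_half_endpoints hfH hab.le]
  ring

end TrapezoidRule

theorem coeff_X_sub_one_pow {R : Type*} [Ring R] (n k : ℕ) :
    ((X - 1 : R[X]) ^ n).coeff k = (-1) ^ (n - k) * n.choose k := by
  rw [sub_eq_add_neg, ← C_1, ← C_neg, coeff_X_add_C_pow]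

section SmoothedPowers

variable (K : Type*) [Field K] [CharZero K]

noncomputable def centralDiffPow (k : ℕ) : K[X] := C 2⁻¹ * ((X + 1) ^ k - (X - 1) ^ k)

noncomputable def smoothedPow (k : ℕ) : K[X] :=
  C 2⁻¹ * X ^ k + C 4⁻¹ * ((X + 1) ^ k + (X - 1) ^ k)

variable {K}

theorem centralDiffPow_coeff_of_lt {k m : ℕ} (h : k < m) :
    (centralDiffPow K (k + 1)).coeff m = 0 := by
  rcases (Nat.succ_le_of_lt h).lt_or_eq with h | rfl
  · simp [centralDiffPow, coeff_X_sub_one_pow, coeff_X_add_one_pow, Nat.choose_eq_zero_of_lt h]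
  · simp [centralDiffPow, coeff_X_sub_one_pow, coeff_X_add_one_pow]

theorem centralDiffPow_natDegree_le (k : ℕ) : (centralDiffPow K (k + 1)).natDegree ≤ k :=
  natDegree_le_iff_coeff_eq_zero.mpr fun _ h => centralDiffPow_coeff_of_lt (by exact_mod_cast h)

theorem centralDiffPow_coeff_self (k : ℕ) : (centralDiffPow K (k + 1)).coeff k = k + 1 := by
  simp only [centralDiffPow, coeff_C_mul, coeff_sub, coeff_X_add_one_pow,
    Nat.choose_succ_self_right, coeff_X_sub_one_pow, add_tsub_cancel_left, pow_one]
  push_cast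
  ring

theorem smoothedPow_coeff_of_lt {k m : ℕ} (h : k < m) : (smoothedPow K k).coeff m = 0 := by
  simp [smoothedPow, coeff_X_sub_one_pow, coeff_X_add_one_pow, coeff_X_pow,
    Nat.choose_eq_zero_of_lt h, h.ne']

theorem smoothedPow_natDegree_le (k : ℕ) : (smoothedPow K k).natDegree ≤ k :=
  natDegree_le_iff_coeff_eq_zero.mpr fun _ h => smoothedPow_coeff_of_lt (by exact_mod_cast h)

theorem smoothedPow_coeff_self (k : ℕ) : (smoothedPow K k).coeff k = 1 := by
  simp only [smoothedPow, coeff_add, coeff_C_mul, coeff_X_pow, coeff_X_add_one_pow,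
    coeff_X_sub_one_pow, Nat.choose_self, tsub_self, if_pos]
  norm_num

theorem smoothedPow_eval_zero (s : K) : (smoothedPow K 0).eval s = 1 := by
  simp only [smoothedPow, pow_zero, mul_one, eval_add, eval_C]
  norm_num

theorem centralDiffPow_eval_add_eval_add_one (k : ℕ) (s : K) :
    ((centralDiffPow K k).eval s + (centralDiffPow K k).eval (s + 1)) / 2 =
      (smoothedPow K k).eval (s + 1) - (smoothedPow K k).eval s := by
  simp only [centralDiffPow, smoothedPow, eval_mul, eval_add, eval_sub, eval_pow, eval_C, eval_X,
    eval_one]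
  ring

end SmoothedPowers

section VandermondeViaSmoothedPowers

variable {K : Type*} [Field K] [CharZero K] {n : ℕ}

theorem factorial_mul_prod_ite_lt_sub_eq_det_centralDiffPow (v : Fin n → K) :
    (n.factorial : K) * (∏ i, ∏ j, if i < j then v i - v j else 1) =
      det (of fun i j : Fin n => (centralDiffPow K (j + 1)).eval (-v i)) := by
  rw [det_of_eval_eq_prod_coeff_mul_det_vandermonde (fun i => -v i) _
    fun j => centralDiffPow_natDegree_le j, prod_ite_lt_sub_eq_det_vandermonde_neg]
  simp only [centralDiffPow_coeff_self]
  rw [Fin.prod_univ_eq_prod_range (fun k => (k : K) + 1), ← prod_range_add_one_eq_factorial]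
  push_cast
  rfl

theorem prod_ite_lt_sub_mul_prod_eq_det_centralDiffPow (v c : Fin n → K) :
    (∏ i, ∏ j, if i < j then v i - v j else 1) * ∏ i, c i =
      (n.factorial : K)⁻¹ *
        det (of fun i j : Fin n => c i * (centralDiffPow K (j + 1)).eval (-v i)) := by
  have hscale := det_mul_column c (of fun i (j : Fin n) => (centralDiffPow K (j + 1)).eval (-v i))
  simp only [of_apply] at hscale
  have hfact : (n.factorial : K) ≠ 0 := Nat.cast_ne_zero.2 n.factorial_ne_zero
  rw [hscale, ← factorial_mul_prod_ite_lt_sub_eq_det_centralDiffPow]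
  field_simp

theorem det_smoothedPow_succ_sub_castSucc (z : Fin (n + 1) → K) :
    det (of fun i j : Fin n => (smoothedPow K (j + 1)).eval (z i.succ) -
      (smoothedPow K (j + 1)).eval (z i.castSucc)) = det (vandermonde z) := by
  refine (det_eq_det_succ_sub_castSucc_of_col_zero
    (of fun i (j : Fin (n + 1)) => (smoothedPow K j).eval (z i))
    fun i => smoothedPow_eval_zero (z i)).symm.trans ?_
  rw [det_of_eval_eq_prod_coeff_mul_det_vandermonde _ _ fun j => smoothedPow_natDegree_le j]
  simp [smoothedPow_coeff_self]

theorem sum_Icc_trapezoidWeight_mul_centralDiffPow_neg (k : ℕ) {a b : ℤ} (hab : a < b) :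
    ∑ t ∈ Icc a b, trapezoidWeight a b t * (centralDiffPow K k).eval (-(t : K)) =
      (smoothedPow K k).eval (-(a : K)) - (smoothedPow K k).eval (-(b : K)) := by
  rw [sum_Icc_trapezoidWeight_mul (H := fun t => -(smoothedPow K k).eval (-(t : K)))
    (fun t => ?_) hab]
  · ring
  have hstep := centralDiffPow_eval_add_eval_add_one k (-(t : K) - 1)
  rw [sub_add_cancel] at hstep
  push_cast
  rw [show -((t : K) + 1) = -t - 1 by ring]
  linear_combination hstep

end VandermondeViaSmoothedPowers

theorem le_of_mem_Icc_succ_castSucc {α : Type*} [Preorder α] [LocallyFiniteOrder α] {n : ℕ}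
    {y : Fin (n + 1) → α} (hy : Antitone y) {x : Fin n → α}
    (hx : ∀ i, x i ∈ Icc (y i.succ) (y i.castSucc)) {i j : Fin n} (hij : i < j) :
    x j ≤ x i :=
  (mem_Icc.1 (hx j)).2.trans <| (hy (Fin.succ_le_castSucc_iff.2 hij)).trans (mem_Icc.1 (hx i)).1

theorem stmt_1_general (n : ℕ) (y : Fin (n + 1) → ℤ)
    (hdec : ∀ i j : Fin (n + 1), i < j → y j < y i) :
    ∑ x ∈ (univ : Finset ((i : Fin n) → {t : ℤ // t ∈ Finset.Icc (y i.succ) (y i.castSucc)})).filter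
        (fun x => ∀ i j : Fin n, i < j → (x j : ℤ) < (x i : ℤ)),
      (∏ i : Fin n, ∏ j : Fin n,
          if i < j then (((x i : ℤ) : ℝ) - ((x j : ℤ) : ℝ)) else 1) *
        ((2 : ℝ) ^ (univ.filter (fun i : Fin n =>
            (x i : ℤ) = y i.castSucc ∨ (x i : ℤ) = y i.succ)).card)⁻¹
    = (∏ i : Fin (n + 1), ∏ j : Fin (n + 1),
          if i < j then ((y i : ℝ) - (y j : ℝ)) else 1) / (Nat.factorial n : ℝ) := by
  have hy : Antitone y := (show StrictAnti y from hdec).antitone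
  rw [sum_filter_of_ne fun x _ hx i j hij =>
    (le_of_mem_Icc_succ_castSucc hy (fun i => (x i).2) hij).lt_of_ne fun heq =>
      ne_of_prod_ite_lt_sub_ne_zero (left_ne_zero_of_mul hx) hij (by rw [heq])]
  simp_rw [← prod_const, ← prod_inv_distrib, prod_filter]
  calc _ = ∑ x : (i : Fin n) → Icc (y i.succ) (y i.castSucc), (n.factorial : ℝ)⁻¹ *
        det (of fun i j : Fin n => trapezoidWeight (y i.succ) (y i.castSucc) (x i) *
          (centralDiffPow ℝ (j + 1)).eval (-((x i : ℤ) : ℝ))) :=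
        sum_congr rfl fun x _ => prod_ite_lt_sub_mul_prod_eq_det_centralDiffPow _ _
    _ = (n.factorial : ℝ)⁻¹ * det (of fun i j : Fin n =>
          ∑ t ∈ Icc (y i.succ) (y i.castSucc), trapezoidWeight (y i.succ) (y i.castSucc) t *
            (centralDiffPow ℝ (j + 1)).eval (-(t : ℝ))) := by
        rw [det_of_sum_eq_sum_det, mul_sum]
    _ = (n.factorial : ℝ)⁻¹ * det (of fun i j : Fin n =>
          (smoothedPow ℝ (j + 1)).eval (-(y i.succ : ℝ)) -
            (smoothedPow ℝ (j + 1)).eval (-(y i.castSucc : ℝ))) := by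
        simp_rw [sum_Icc_trapezoidWeight_mul_centralDiffPow_neg _ (hdec _ _ Fin.castSucc_lt_succ)]
    _ = _ := by
        rw [det_smoothedPow_succ_sub_castSucc fun i => -(y i : ℝ),
          prod_ite_lt_sub_eq_det_vandermonde_neg, div_eq_inv_mul]
        rfl

/-- Fix `n ≥ 1` and a strictly decreasing integer tuple
`y = (y₁ > … > y_{n+1})`.  The sum over all strictly decreasing integer tuples
`x = (x₁ > … > x_n)` with `y_{i+1} ≤ x_i ≤ y_i` of
`Δ(x) ⬝ 2^{-#{i : x_i = y_i or x_i = y_{i+1}}}` equals `Δ(y)/n!`. -/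
theorem stmt_1 (n : ℕ) (hn : 1 ≤ n) (y : Fin (n + 1) → ℤ)
    (hdec : ∀ i j : Fin (n + 1), i < j → y j < y i) :
    ∑ x ∈ (univ : Finset ((i : Fin n) → {t : ℤ // t ∈ Finset.Icc (y i.succ) (y i.castSucc)})).filter
        (fun x => ∀ i j : Fin n, i < j → (x j : ℤ) < (x i : ℤ)),
      (∏ i : Fin n, ∏ j : Fin n,
          if i < j then (((x i : ℤ) : ℝ) - ((x j : ℤ) : ℝ)) else 1) *
        ((2 : ℝ) ^ (univ.filter (fun i : Fin n =>
            (x i : ℤ) = y i.castSucc ∨ (x i : ℤ) = y i.succ)).card)⁻¹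
    = (∏ i : Fin (n + 1), ∏ j : Fin (n + 1),
          if i < j then ((y i : ℝ) - (y j : ℝ)) else 1) / (Nat.factorial n : ℝ) :=
  stmt_1_general n y hdec
end

section
/- Let n ≥ 1 and let y_1 > y_2 > … > y_{n+1} be real numbers. Set a_i = y_{n−i+2} and b_i = y_{n−i+1} for i = 1,…,n. Then det[(b_i^j − a_i^j)/j]_{i,j=1,…,n} = (1/n!) · ∏_{1≤i<j≤n+1}(y_i − y_j). -/
open Finset

private lemma aux_fact (m : ℕ) :
    ∏ j : Fin (m + 1), (if (j : ℕ) = 0 then (1 : ℝ) else ((j : ℕ) : ℝ)) = (Nat.factorial m : ℝ) := by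
  induction m with
  | zero => simp
  | succ m ih =>
      rw [Fin.prod_univ_castSucc]
      have : ∀ j : Fin (m + 1),
          (if ((Fin.castSucc j : Fin (m + 2)) : ℕ) = 0 then (1 : ℝ) else
            (((Fin.castSucc j : Fin (m + 2)) : ℕ) : ℝ))
          = (if (j : ℕ) = 0 then (1 : ℝ) else ((j : ℕ) : ℝ)) := by
        intro j; simp
      rw [Finset.prod_congr rfl (fun j _ => this j), ih]
      have hlast : ((Fin.last (m + 1) : Fin (m + 2)) : ℕ) = m + 1 := rfl
      rw [hlast, Nat.factorial_succ]
      push_cast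
      ring

private lemma prod_rev_aux (m : ℕ) (y : Fin (m + 1) → ℝ) :
    (∏ i : Fin (m + 1), ∏ j ∈ Ioi i, (y (Fin.rev j) - y (Fin.rev i)))
      = ∏ i : Fin (m + 1), ∏ j : Fin (m + 1), if i < j then (y i - y j) else 1 := by
  have hrhs : ∀ i : Fin (m + 1),
      (∏ j : Fin (m + 1), if i < j then y i - y j else 1) = ∏ j ∈ Ioi i, (y i - y j) := by
    intro i
    rw [← Finset.prod_filter]
    congr 1
    ext j
    simp
  have stepA : (∏ i : Fin (m + 1), ∏ j ∈ Ioi i, (y (Fin.rev j) - y (Fin.rev i)))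
      = ∏ i : Fin (m + 1), ∏ j ∈ Ioi (Fin.rev i), (y (Fin.rev j) - y (Fin.rev (Fin.rev i))) :=
    (Equiv.prod_comp Fin.revPerm
      (fun i => ∏ j ∈ Ioi i, (y (Fin.rev j) - y (Fin.rev i)))).symm
  have stepB : ∀ i : Fin (m + 1),
      (∏ j ∈ Ioi (Fin.rev i), (y (Fin.rev j) - y (Fin.rev (Fin.rev i))))
        = ∏ j ∈ Iio i, (y j - y i) := by
    intro i
    refine Finset.prod_bij' (fun j _ => Fin.rev j) (fun j _ => Fin.rev j) ?_ ?_ ?_ ?_ ?_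
    · intro j hj
      rw [Finset.mem_Ioi] at hj
      rw [Finset.mem_Iio, ← Fin.rev_lt_rev, Fin.rev_rev]
      exact hj
    · intro j hj
      rw [Finset.mem_Iio] at hj
      simp only [Finset.mem_Ioi]
      exact (Fin.rev_lt_rev).mpr hj
    · intro j _; exact Fin.rev_rev j
    · intro j _; exact Fin.rev_rev j
    · intro j _
      simp [Fin.rev_rev]
  have stepC : (∏ i : Fin (m + 1), ∏ j ∈ Iio i, (y j - y i))
      = ∏ j : Fin (m + 1), ∏ i ∈ Ioi j, (y j - y i) := by
    refine Finset.prod_comm' ?_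
    intro x y
    simp [Finset.mem_Iio, Finset.mem_Ioi, and_comm]
  rw [stepA, Finset.prod_congr rfl (fun i _ => stepB i), stepC]
  exact Finset.prod_congr rfl (fun i _ => (hrhs i).symm)

/-- Let `n ≥ 1` and `y₁ > y₂ > … > y_{n+1}` be real numbers,
and set `aᵢ = y_{n-i+2}`, `bᵢ = y_{n-i+1}` (1-based; in the 0-based indexing
below, row `i` uses `b = y (n-1-i)` and `a = y (n-i)`).  Then
`det[(bᵢʲ - aᵢʲ)/j]_{i,j=1,…,n} = (1/n!) ∏_{1≤i<j≤n+1} (yᵢ - yⱼ)`. -/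
theorem stmt_2 (n : ℕ) (hn : 1 ≤ n) (y : Fin (n + 1) → ℝ)
    (hdec : ∀ i j : Fin (n + 1), i < j → y j < y i) :
    Matrix.det (Matrix.of fun i j : Fin n =>
      ((y ⟨n - 1 - (i : ℕ), Nat.lt_succ_of_le ((Nat.sub_le _ _).trans (Nat.sub_le _ _))⟩)
          ^ ((j : ℕ) + 1)
        - (y ⟨n - (i : ℕ), Nat.lt_succ_of_le (Nat.sub_le _ _)⟩) ^ ((j : ℕ) + 1))
        / ((j : ℕ) + 1))
    = (1 / (Nat.factorial n : ℝ)) *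
        ∏ i : Fin (n + 1), ∏ j : Fin (n + 1), if i < j then (y i - y j) else 1 := by
  classical
  set z : Fin (n + 1) → ℝ := fun k => y k.rev with hz
  set A : Matrix (Fin (n + 1)) (Fin (n + 1)) ℝ :=
    Matrix.of (fun k j : Fin (n + 1) =>
      (if (j : ℕ) = 0 then (1 : ℝ) else ((j : ℕ) : ℝ))⁻¹ * z k ^ (j : ℕ)) with hA
  set B : Matrix (Fin (n + 1)) (Fin (n + 1)) ℝ :=
    Matrix.of (fun k j : Fin (n + 1) =>
      Fin.cases (A 0 j) (fun i => A i.succ j - A i.castSucc j) k) with hB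
  -- Step 1: det A = det B (row operations)
  have hAB : A.det = B.det := by
    apply Matrix.det_eq_of_forall_row_eq_smul_add_pred (fun _ => (1 : ℝ))
    · intro j; simp [hB]
    · intro i j
      simp only [hB, Matrix.of_apply, Fin.cases_succ, one_mul]
      ring
  -- Step 2: expand B along column 0
  have hB0 : ∀ k : Fin (n + 1), B k 0 = if k = 0 then 1 else 0 := by
    intro k
    induction k using Fin.cases with
    | zero => simp [hB, hA]
    | succ i => simp [hB, hA, Fin.succ_ne_zero]
  have hBdet : B.det = Matrix.det (B.submatrix Fin.succ Fin.succ) := by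
    rw [Matrix.det_succ_column_zero]
    rw [Finset.sum_eq_single (0 : Fin (n + 1))]
    · simp [hB0, Fin.succAbove_zero]
    · intro i _ hi
      rw [hB0]
      simp [hi]
    · intro h; exact absurd (Finset.mem_univ _) h
  -- Step 3: the submatrix is the matrix in the statement
  have hsub : (Matrix.of fun i j : Fin n =>
      ((y ⟨n - 1 - (i : ℕ), Nat.lt_succ_of_le ((Nat.sub_le _ _).trans (Nat.sub_le _ _))⟩)
          ^ ((j : ℕ) + 1)
        - (y ⟨n - (i : ℕ), Nat.lt_succ_of_le (Nat.sub_le _ _)⟩) ^ ((j : ℕ) + 1))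
        / ((j : ℕ) + 1)) = B.submatrix Fin.succ Fin.succ := by
    ext i j
    have h1 : (i.succ : Fin (n + 1)).rev = ⟨n - 1 - (i : ℕ), by omega⟩ := by
      ext
      rw [Fin.val_rev]
      simp only [Fin.val_succ, Fin.coe_castSucc]
      omega
    have h2 : (i.castSucc : Fin (n + 1)).rev = ⟨n - (i : ℕ), by omega⟩ := by
      ext
      rw [Fin.val_rev]
      simp only [Fin.val_succ, Fin.coe_castSucc]
      omega
    have hjs : ((j.succ : Fin (n + 1)) : ℕ) = (j : ℕ) + 1 := rfl
    simp only [Matrix.submatrix_apply, hB, Matrix.of_apply, Fin.cases_succ, hA, hjs,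
      Nat.succ_ne_zero, if_false, hz, h1, h2]
    rw [div_eq_inv_mul]
    push_cast
    ring
  rw [hsub, ← hBdet, ← hAB]
  -- Step 4: compute det A via Vandermonde
  have hAv : A.det = (∏ j : Fin (n + 1),
      (if (j : ℕ) = 0 then (1 : ℝ) else ((j : ℕ) : ℝ))⁻¹) * (Matrix.vandermonde z).det := by
    rw [hA]
    exact Matrix.det_mul_row _ _
  have hprod : (∏ j : Fin (n + 1),
      (if (j : ℕ) = 0 then (1 : ℝ) else ((j : ℕ) : ℝ))⁻¹) = ((Nat.factorial n : ℕ) : ℝ)⁻¹ := by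
    rw [Finset.prod_inv_distrib, aux_fact n]
  rw [hAv, hprod, Matrix.det_vandermonde, one_div]
  congr 1
  exact prod_rev_aux n y
end

section
/- Let N ≥ 0 and let X and Y be disjoint subsets of {0, 1, …, N} with X ∪ Y = {0,…,N}. Then ∏_{\{u,v\}⊆X, u≠v} |u − v| = (∏_{\{u,v\}⊆Y, u≠v} |u − v|) · (∏_{i=1}^{N} i!) / (∏_{y∈Y} y! (N−y)!). -/
open Finset Nat

/-! With `gapProd S T = ∏_{u ∈ S, v ∈ T, u < v} (v - u)`, the full table over `[0, N]` is
`∏ i!`, and its column and row through `y` are `y!` and `(N - y)!`. Splitting `[0, N] = X ⊔ Y`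
in both arguments of `gapProd` turns these three facts into the identity. -/

section CommRing

variable {R : Type*} [CommRing R]

def gapProd (S T : Finset ℕ) : R :=
  ∏ u ∈ S, ∏ v ∈ T, if u < v then ((v : R) - u) else 1

theorem gapProd_union_left {S S' : Finset ℕ} (h : Disjoint S S') (T : Finset ℕ) :
    (gapProd (S ∪ S') T : R) = gapProd S T * gapProd S' T :=
  prod_union h

theorem gapProd_union_right (S : Finset ℕ) {T T' : Finset ℕ} (h : Disjoint T T') :
    (gapProd S (T ∪ T') : R) = gapProd S T * gapProd S T' := by
  simp only [gapProd, prod_union h, prod_mul_distrib]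

theorem gapProd_eq_prod_singleton_left (S T : Finset ℕ) :
    (gapProd S T : R) = ∏ u ∈ S, gapProd {u} T := by
  simp only [gapProd, prod_singleton]

theorem gapProd_eq_prod_singleton_right (S T : Finset ℕ) :
    (gapProd S T : R) = ∏ v ∈ T, gapProd S {v} := by
  rw [gapProd, prod_comm]
  simp only [gapProd, prod_singleton]

theorem gapProd_range_singleton {N y : ℕ} (hy : y ≤ N) :
    (gapProd (range (N + 1)) {y} : R) = y ! := by
  have hfilter : (range (N + 1)).filter (· < y) = range y := by
    ext u; simp only [mem_filter, mem_range]; omega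
  rw [gapProd, prod_congr rfl fun u _ => prod_singleton _ _, ← prod_filter, hfilter,
    ← descPochhammer_eval_eq_prod_range, descPochhammer_eval_eq_descFactorial,
    Nat.descFactorial_self]

theorem gapProd_singleton_range (N y : ℕ) :
    (gapProd {y} (range (N + 1)) : R) = (N - y)! := by
  have hfilter : (range (N + 1)).filter (y < ·) = Ico (y + 1) (N + 1) := by
    ext v; simp only [mem_filter, mem_range, mem_Ico]; omega
  have hlen : N + 1 - (y + 1) = N - y := by omega
  rw [gapProd, prod_singleton, ← prod_filter, hfilter, prod_Ico_eq_prod_range, hlen,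
    ← prod_range_add_one_eq_factorial, Nat.cast_prod]
  refine prod_congr rfl fun i _ => ?_
  push_cast
  ring

theorem gapProd_range_range (N : ℕ) :
    (gapProd (range (N + 1)) (range (N + 1)) : R) = ∏ i ∈ range (N + 1), (i ! : R) := by
  rw [gapProd_eq_prod_singleton_right]
  exact prod_congr rfl fun y hy => gapProd_range_singleton (mem_range_succ_iff.mp hy)

theorem prod_factorial_mul_factorial_sub_eq_gapProd {N : ℕ} {Y : Finset ℕ}
    (hY : Y ⊆ range (N + 1)) :
    ∏ y ∈ Y, ((y ! * (N - y)! : ℕ) : R) =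
      gapProd (range (N + 1)) Y * gapProd Y (range (N + 1)) := by
  rw [gapProd_eq_prod_singleton_right, gapProd_eq_prod_singleton_left (S := Y),
    ← prod_mul_distrib]
  refine prod_congr rfl fun y hy => ?_
  have hyN : y ≤ N := mem_range_succ_iff.mp (hY hy)
  rw [gapProd_range_singleton hyN, gapProd_singleton_range N y, Nat.cast_mul]

theorem gapProd_self_mul_eq_of_disjoint {X Y : Finset ℕ} (h : Disjoint X Y) :
    (gapProd X X : R) * (gapProd (X ∪ Y) Y * gapProd Y (X ∪ Y)) =
      gapProd Y Y * gapProd (X ∪ Y) (X ∪ Y) := by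
  simp only [gapProd_union_left h, gapProd_union_right _ h]
  ring

end CommRing

/-- Let `N ≥ 0` and let `X` and `Y` be disjoint subsets of
`{0,1,…,N}` with `X ∪ Y = {0,…,N}`.  Then, with `Δ(Z) = ∏_{{u,v}⊆Z, u≠v} |u-v|`
the absolute Vandermonde product over unordered pairs,
`Δ(X) = Δ(Y) ⬝ (∏_{i=1}^N i!) / (∏_{y∈Y} y! (N-y)!)`. -/
theorem stmt_6 (N : ℕ) (X Y : Finset ℕ) (hdisj : Disjoint X Y)
    (hunion : X ∪ Y = Finset.range (N + 1)) :
    (∏ u ∈ X, ∏ v ∈ X, if u < v then ((v : ℝ) - (u : ℝ)) else 1)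
    = (∏ u ∈ Y, ∏ v ∈ Y, if u < v then ((v : ℝ) - (u : ℝ)) else 1) *
        (∏ i ∈ Finset.range (N + 1), (Nat.factorial i : ℝ)) /
        (∏ y ∈ Y, ((Nat.factorial y * Nat.factorial (N - y) : ℕ) : ℝ)) := by
  have hden : ∏ y ∈ Y, ((Nat.factorial y * Nat.factorial (N - y) : ℕ) : ℝ) ≠ 0 := by
    positivity
  rw [eq_div_iff hden]
  change gapProd X X * _ = gapProd Y Y * _
  rw [prod_factorial_mul_factorial_sub_eq_gapProd (hunion ▸ subset_union_right),
    ← gapProd_range_range, ← hunion]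
  exact gapProd_self_mul_eq_of_disjoint hdisj
end

section
/- Let M ≥ 0 and let X and Y be disjoint subsets of {1, 2, …, M+1} with X ∪ Y = {1,…,M+1}. Then ∏_{\{u,v\}⊆X, u≠v}(u+v−1) = (∏_{\{u,v\}⊆Y, u≠v}(u+v−1)) · (∏_{y∈Y}(2y−1)) · (∏_{y∈Y} (y−1)!/(y+M)!) · ∏_{j=1}^{M} (2j)!/j!. -/
open Finset

noncomputable def Sfun (Z : Finset ℕ) : ℝ :=
  ∏ u ∈ Z, ∏ v ∈ Z, if u < v then ((u : ℝ) + (v : ℝ) - 1) else 1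

lemma Sfun_split (A B : Finset ℕ) (h : Disjoint A B) :
    Sfun (A ∪ B) = Sfun A * Sfun B * ∏ a ∈ A, ∏ b ∈ B, ((a : ℝ) + b - 1) := by
  unfold Sfun
  rw [Finset.prod_union h]
  simp_rw [Finset.prod_union h, Finset.prod_mul_distrib]
  have hBA : (∏ u ∈ B, ∏ v ∈ A, if u < v then ((u : ℝ) + v - 1) else 1)
      = ∏ a ∈ A, ∏ b ∈ B, if b < a then ((a : ℝ) + b - 1) else 1 := by
    rw [Finset.prod_comm]
    apply Finset.prod_congr rfl; intro a _
    apply Finset.prod_congr rfl; intro b _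
    by_cases hlt : b < a
    · simp [hlt]; ring
    · simp [hlt]
  rw [hBA]
  have hcross : (∏ a ∈ A, ∏ b ∈ B, if a < b then ((a : ℝ) + b - 1) else 1) *
      (∏ a ∈ A, ∏ b ∈ B, if b < a then ((a : ℝ) + b - 1) else 1)
      = ∏ a ∈ A, ∏ b ∈ B, ((a : ℝ) + b - 1) := by
    rw [← Finset.prod_mul_distrib]
    apply Finset.prod_congr rfl; intro a ha
    rw [← Finset.prod_mul_distrib]
    apply Finset.prod_congr rfl; intro b hb
    have hne : a ≠ b := fun hab => (Finset.disjoint_left.mp h) ha (hab ▸ hb)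
    rcases lt_trichotomy a b with hl | he | hl
    · simp [hl, not_lt_of_gt hl]
    · exact absurd he hne
    · simp [hl, not_lt_of_gt hl]
  rw [← hcross]; ring

lemma nat_prod_shift (M y : ℕ) (hy : 1 ≤ y) :
    (Nat.factorial (y - 1)) * ∏ x ∈ Finset.Icc 1 (M + 1), (x + y - 1)
      = Nat.factorial (y + M) := by
  induction M with
  | zero =>
    simp only [Finset.Icc_self, Finset.prod_singleton, Nat.add_zero]
    obtain ⟨k, rfl⟩ : ∃ k, y = k + 1 := ⟨y - 1, by omega⟩
    simp [Nat.factorial_succ, Nat.mul_comm]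
  | succ M ih =>
    rw [Finset.prod_Icc_succ_top (by omega : 1 ≤ M + 1 + 1), ← Nat.mul_assoc, ih,
      show M + 1 + 1 + y - 1 = y + M + 1 by omega, show y + (M+1) = (y + M) + 1 by omega,
      Nat.factorial_succ, Nat.mul_comm]

lemma real_prod_shift (M y : ℕ) (hy : 1 ≤ y) :
    (∏ x ∈ Finset.Icc 1 (M + 1), ((x : ℝ) + y - 1))
      = (Nat.factorial (y + M) : ℝ) / (Nat.factorial (y - 1) : ℝ) := by
  rw [eq_div_iff (by positivity), mul_comm, ← nat_prod_shift M y hy]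
  push_cast
  congr 1
  apply Finset.prod_congr rfl
  intro x hx
  have hx1 : 1 ≤ x := (Finset.mem_Icc.mp hx).1
  have : (((x + y - 1 : ℕ)) : ℝ) = (x : ℝ) + y - 1 := by
    push_cast [Nat.cast_sub (by omega : 1 ≤ x + y)]; ring
  rw [this]

lemma Sfun_Icc (M : ℕ) :
    Sfun (Finset.Icc 1 (M + 1))
      = ∏ j ∈ Finset.Icc 1 M, ((Nat.factorial (2 * j) : ℝ) / (Nat.factorial j : ℝ)) := by
  induction M with
  | zero => simp [Sfun]
  | succ M ih =>
    have hU : Finset.Icc 1 (M + 1 + 1) = Finset.Icc 1 (M + 1) ∪ {M + 2} := by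
      ext x; simp [Finset.mem_Icc, Finset.mem_union]; omega
    have hd : Disjoint (Finset.Icc 1 (M + 1)) ({M + 2} : Finset ℕ) := by
      simp [Finset.disjoint_left, Finset.mem_Icc]; omega
    rw [hU, Sfun_split _ _ hd, ih]
    have hs : Sfun ({M + 2} : Finset ℕ) = 1 := by simp [Sfun]
    have hc : (∏ a ∈ Finset.Icc 1 (M + 1), ∏ b ∈ ({M + 2} : Finset ℕ), ((a : ℝ) + b - 1))
        = (Nat.factorial (2 * (M + 1)) : ℝ) / (Nat.factorial (M + 1) : ℝ) := by
      simp only [Finset.prod_singleton]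
      have := real_prod_shift M (M + 2) (by omega)
      push_cast at this ⊢
      rw [show M + 2 + M = 2 * (M + 1) by omega] at this
      rw [this]
    rw [hs, hc, Finset.prod_Icc_succ_top (by omega : 1 ≤ M + 1)]
    ring

lemma Sfun_pos (Z : Finset ℕ) (hZ : ∀ z ∈ Z, 1 ≤ z) : 0 < Sfun Z := by
  apply Finset.prod_pos; intro u hu
  apply Finset.prod_pos; intro v hv
  have := hZ u hu; have := hZ v hv
  by_cases h : u < v
  · simp only [h, if_true]
    have : (1 : ℝ) ≤ (u : ℝ) := by exact_mod_cast hZ u hu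
    have : (1 : ℝ) ≤ (v : ℝ) := by exact_mod_cast hZ v hv
    nlinarith
  · simp [h]

/-- Let `M ≥ 0` and let `X` and `Y` be disjoint subsets of
`{1,…,M+1}` with `X ∪ Y = {1,…,M+1}`.  Then, with
`S(Z) = ∏_{{u,v}⊆Z, u≠v} (u+v-1)` the product over unordered pairs,
`S(X) = S(Y) ⬝ ∏_{y∈Y} (2y-1) ⬝ ∏_{y∈Y} (y-1)!/(y+M)! ⬝ ∏_{j=1}^M (2j)!/j!`. -/
theorem stmt_11 (M : ℕ) (X Y : Finset ℕ) (hdisj : Disjoint X Y)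
    (hunion : X ∪ Y = Finset.Icc 1 (M + 1)) :
    (∏ u ∈ X, ∏ v ∈ X, if u < v then ((u : ℝ) + (v : ℝ) - 1) else 1)
    = (∏ u ∈ Y, ∏ v ∈ Y, if u < v then ((u : ℝ) + (v : ℝ) - 1) else 1) *
        (∏ y ∈ Y, ((2 * y - 1 : ℕ) : ℝ)) *
        (∏ y ∈ Y, ((Nat.factorial (y - 1) : ℝ) / (Nat.factorial (y + M) : ℝ))) *
        ∏ j ∈ Finset.Icc 1 M,
          ((Nat.factorial (2 * j) : ℝ) / (Nat.factorial j : ℝ)) := by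
  have hX : ∀ x ∈ X, 1 ≤ x := by
    intro x hx
    have : x ∈ Finset.Icc 1 (M + 1) := hunion ▸ Finset.mem_union_left Y hx
    exact (Finset.mem_Icc.mp this).1
  have hY : ∀ y ∈ Y, 1 ≤ y := by
    intro y hy
    have : y ∈ Finset.Icc 1 (M + 1) := hunion ▸ Finset.mem_union_right X hy
    exact (Finset.mem_Icc.mp this).1
  set Cross : ℝ := ∏ a ∈ X, ∏ b ∈ Y, ((a : ℝ) + b - 1) with hCrossDef
  set A : ℝ := ∏ y ∈ Y, ((2 * y - 1 : ℕ) : ℝ) with hA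
  set B : ℝ := ∏ y ∈ Y, ((Nat.factorial (y - 1) : ℝ) / (Nat.factorial (y + M) : ℝ)) with hB
  set D : ℝ := ∏ j ∈ Finset.Icc 1 M, ((Nat.factorial (2 * j) : ℝ) / (Nat.factorial j : ℝ))
    with hD
  -- Step 1: Sfun X * Sfun Y * Cross = D
  have h1 : Sfun X * Sfun Y * Cross = D := by
    rw [hD, ← Sfun_Icc M, ← hunion, Sfun_split X Y hdisj]
  -- Step 2: per-element product over the whole interval
  have h2 : ∀ y ∈ Y, (∏ x ∈ X, ((x : ℝ) + y - 1)) * (∏ x ∈ Y, ((x : ℝ) + y - 1))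
      = (Nat.factorial (y + M) : ℝ) / (Nat.factorial (y - 1) : ℝ) := by
    intro y hy
    rw [← Finset.prod_union hdisj, hunion, real_prod_shift M y (hY y hy)]
  -- Step 3: split off the diagonal term
  have h3 : ∀ y ∈ Y, (∏ x ∈ Y, ((x : ℝ) + y - 1))
      = ((2 * y - 1 : ℕ) : ℝ) * ∏ x ∈ Y.erase y, ((x : ℝ) + y - 1) := by
    intro y hy
    rw [← Finset.mul_prod_erase Y _ hy]
    congr 1
    have := hY y hy
    push_cast [Nat.cast_sub (by omega : 1 ≤ 2 * y)]
    ring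
  -- Step 4: the double erase-product equals (Sfun Y)^2
  have h4 : (∏ y ∈ Y, ∏ x ∈ Y.erase y, ((x : ℝ) + y - 1)) = Sfun Y * Sfun Y := by
    have step : ∀ y ∈ Y, (∏ x ∈ Y.erase y, ((x : ℝ) + y - 1))
        = ∏ x ∈ Y, ((if x < y then ((x : ℝ) + y - 1) else 1) *
            (if y < x then ((x : ℝ) + y - 1) else 1)) := by
      intro y hy
      rw [← Finset.prod_erase Y
        (f := fun x => (if x < y then ((x : ℝ) + y - 1) else 1) *
          (if y < x then ((x : ℝ) + y - 1) else 1)) (a := y) (by simp)]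
      apply Finset.prod_congr rfl
      intro x hx
      have hne : x ≠ y := Finset.ne_of_mem_erase hx
      rcases lt_trichotomy x y with hl | he | hl
      · simp [hl, not_lt_of_gt hl]
      · exact absurd he hne
      · simp [hl, not_lt_of_gt hl]
    rw [Finset.prod_congr rfl step]
    simp_rw [Finset.prod_mul_distrib]
    congr 1
    · rw [Finset.prod_comm]
      unfold Sfun
      apply Finset.prod_congr rfl; intro u _
      apply Finset.prod_congr rfl; intro v _
      rfl
    · unfold Sfun
      apply Finset.prod_congr rfl; intro u _
      apply Finset.prod_congr rfl; intro v _
      by_cases h : u < v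
      · simp [h]; ring
      · simp [h]
  -- Step 5: Cross * (A * (Sfun Y * Sfun Y)) = ∏ factorial ratios
  have h5 : Cross * (A * (Sfun Y * Sfun Y))
      = ∏ y ∈ Y, ((Nat.factorial (y + M) : ℝ) / (Nat.factorial (y - 1) : ℝ)) := by
    rw [hCrossDef, Finset.prod_comm, ← h4, hA, ← Finset.prod_mul_distrib,
      ← Finset.prod_mul_distrib]
    apply Finset.prod_congr rfl
    intro y hy
    rw [← h3 y hy, h2 y hy]
  -- Step 6: the factorial ratios cancel against B
  have h6 : (∏ y ∈ Y, ((Nat.factorial (y + M) : ℝ) / (Nat.factorial (y - 1) : ℝ))) * B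
      = 1 := by
    rw [hB, ← Finset.prod_mul_distrib]
    apply Finset.prod_eq_one
    intro y hy
    have h1 : (Nat.factorial (y - 1) : ℝ) ≠ 0 := by positivity
    have h2 : (Nat.factorial (y + M) : ℝ) ≠ 0 := by positivity
    field_simp
  -- nonvanishing
  have hSYpos : 0 < Sfun Y := Sfun_pos Y hY
  have hCpos : 0 < Cross := by
    rw [hCrossDef]
    apply Finset.prod_pos; intro a ha
    apply Finset.prod_pos; intro b hb
    have h1 : (1 : ℝ) ≤ (a : ℝ) := by exact_mod_cast hX a ha
    have h2 : (1 : ℝ) ≤ (b : ℝ) := by exact_mod_cast hY b hb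
    linarith
  have hne : Sfun Y * Cross ≠ 0 := by positivity
  -- assemble
  have e1 : Sfun X * (Sfun Y * Cross) = D := by rw [← h1]; ring
  have e2 : (Sfun Y * A * B * D) * (Sfun Y * Cross) = D := by
    calc (Sfun Y * A * B * D) * (Sfun Y * Cross)
        = (Cross * (A * (Sfun Y * Sfun Y))) * B * D := by ring
      _ = (∏ y ∈ Y, ((Nat.factorial (y + M) : ℝ) / (Nat.factorial (y - 1) : ℝ))) * B * D := by
          rw [h5]
      _ = 1 * D := by rw [h6]
      _ = D := one_mul D
  exact mul_right_cancel₀ hne (e1.trans e2.symm)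
end

section
/- Let a < b be integers and let w : {a,a+1,…,b} → ℝ_{>0} be a weight function even about the midpoint m = (a+b)/2, i.e. w(m+t) = w(m−t) whenever m±t ∈ {a,…,b}. Let (p_n)_{n≥0} be the monic orthogonal polynomials satisfying ∑_{x=a}^{b} w(x) p_j(x) p_k(x) = (p_j,p_j) δ_{j,k}. Then for every n ≥ 1, ∑_{x_1=a}^{b} ⋯ ∑_{x_n=a}^{b} w(x_1)⋯w(x_n) · (∏_{1≤i<j≤n} ((x_i−m)^2 − (x_j−m)^2))^2 · ∏_{i=1}^{n} (x_i − m)^2 = n! · ∏_{j=0}^{n−1} (p_{2j+1}, p_{2j+1}). -/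
/-!
Write `y = x - m` and `u = y²`. Positivity of `w` makes monic orthogonal polynomials unique on the
nodes, and `(-1)ᵏ pₖ(a + b - x)` is another such family because `w` is even; hence `p_{2j+1}` is odd
about `m` on the nodes, where it agrees with `y ↦ y rⱼ(y²)` for a monic `rⱼ` of degree `j`. So the
matrix `(p_{2j+1}(xᵢ))` has determinant `∏ yᵢ` times the Vandermonde determinant in the `uᵢ`, and
the left-hand side is `∑ ∏ w(xᵢ) det(p_{2j+1}(xᵢ))²`. Expanding both determinants over permutations
(Andréief's identity) turns this into `n!` times the Gram determinant of the `p_{2j+1}`, which is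
diagonal by orthogonality.
-/

open Finset Polynomial Equiv Nat

section Andreief

variable {R X : Type*} [CommRing R] [Fintype X]

theorem sum_sign_mul_sign_mul_prod_eq_det {n : ℕ} (G : Matrix (Fin n) (Fin n) R)
    (σ : Perm (Fin n)) :
    ∑ τ : Perm (Fin n), (Perm.sign σ : R) * Perm.sign τ * ∏ i, G (σ i) (τ i) = G.det := by
  rw [← Matrix.det_transpose, Matrix.det_apply', ← Equiv.sum_comp (Equiv.mulRight σ)]
  refine sum_congr rfl fun τ _ => ?_
  have hsign : (Perm.sign σ : R) * Perm.sign (τ * σ) = Perm.sign τ := by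
    rcases Int.units_eq_one_or (Perm.sign σ) with h | h <;> simp [Perm.sign_mul, h]
  simp only [coe_mulRight, Perm.coe_mul, Function.comp_apply, Matrix.transpose_apply, hsign,
    Equiv.prod_comp σ fun i => G i (τ i)]

theorem sum_prod_mul_det_sq (n : ℕ) (ω : X → R) (f : Fin n → X → R) :
    ∑ x : Fin n → X, (∏ i, ω (x i)) * (Matrix.of fun i j => f j (x i)).det ^ 2 =
      n ! * (Matrix.of fun j k => ∑ t, ω t * f j t * f k t).det := by
  have hdet : ∀ x : Fin n → X, (Matrix.of fun i j => f j (x i)).det =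
      ∑ σ : Perm (Fin n), (Perm.sign σ : R) * ∏ i, f (σ i) (x i) := fun x => by
    rw [← Matrix.det_transpose, Matrix.det_apply']; rfl
  calc _ = ∑ σ : Perm (Fin n), ∑ τ : Perm (Fin n), (Perm.sign σ : R) * Perm.sign τ *
          ∑ x : Fin n → X, ∏ i, ω (x i) * f (σ i) (x i) * f (τ i) (x i) := by
        simp only [hdet, sq, sum_mul, mul_sum, prod_mul_distrib]
        rw [sum_comm]
        refine sum_congr rfl fun σ _ => ?_
        rw [sum_comm]
        exact sum_congr rfl fun τ _ => sum_congr rfl fun x _ => by ring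
    _ = ∑ σ : Perm (Fin n), (Matrix.of fun j k => ∑ t, ω t * f j t * f k t).det := by
        refine sum_congr rfl fun σ _ => ?_
        rw [← sum_sign_mul_sign_mul_prod_eq_det _ σ]
        simp only [Matrix.of_apply, Fintype.prod_sum]
    _ = _ := by simp [Fintype.card_perm]

theorem sum_prod_mul_det_sq_of_orthogonal (n : ℕ) (ω : X → R) (f : Fin n → X → R)
    (horth : ∀ j k, j ≠ k → ∑ t, ω t * f j t * f k t = 0) :
    ∑ x : Fin n → X, (∏ i, ω (x i)) * (Matrix.of fun i j => f j (x i)).det ^ 2 =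
      n ! * ∏ j, ∑ t, ω t * f j t ^ 2 := by
  rw [sum_prod_mul_det_sq, ← Matrix.det_diagonal]
  congr 2
  ext j k
  rcases eq_or_ne j k with rfl | hjk
  · simp [sq, mul_assoc]
  · simp [horth j k hjk, Matrix.diagonal_apply_ne _ hjk]

end Andreief

section Vandermonde

variable {R : Type*} [CommRing R] {n : ℕ}

theorem prod_ite_lt_sub_sq (v : Fin n → R) :
    (∏ i, ∏ j, if i < j then v i - v j else 1) ^ 2 = (∏ i, ∏ j ∈ Ioi i, (v j - v i)) ^ 2 := by
  have hfilter : ∀ i, (∏ j, if i < j then v i - v j else 1) = ∏ j ∈ Ioi i, (v i - v j) := by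
    intro i
    rw [← prod_filter]
    congr 1
    ext j
    simp
  simp only [hfilter, ← prod_pow]
  exact prod_congr rfl fun i _ => prod_congr rfl fun j _ => by rw [← neg_sub, neg_sq]

theorem det_mul_eval_eq_prod_mul_prod_sub (y u : Fin n → R) (r : Fin n → R[X])
    (hdeg : ∀ j, (r j).natDegree = j) (hmonic : ∀ j, (r j).Monic) :
    (Matrix.of fun i j => y i * (r j).eval (u i)).det =
      (∏ i, y i) * ∏ i, ∏ j ∈ Ioi i, (u j - u i) := by
  refine (Matrix.det_mul_column y (Matrix.of fun i j => (r j).eval (u i))).trans ?_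
  rw [← Matrix.det_eval_matrixOfPolynomials_eq_det_vandermonde u r hdeg hmonic,
    Matrix.det_vandermonde]

end Vandermonde

section OddPart

variable {R : Type*} [CommRing R] {f : R[X]} {j : ℕ}

theorem coeff_comp_neg_X (f : R[X]) (n : ℕ) : (f.comp (-X)).coeff n = (-1) ^ n * f.coeff n := by
  induction f using Polynomial.induction_on' with
  | add f g hf hg => simp [add_comp, hf, hg, mul_add]
  | monomial k a =>
    rw [← C_mul_X_pow_eq_monomial, mul_comp, C_comp, X_pow_comp, neg_pow, coeff_C_mul, coeff_C_mul,
      ← C_1, ← C_neg, ← C_pow, coeff_C_mul, coeff_X_pow]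
    split_ifs with h <;> simp [h, mul_comm]

theorem sub_comp_neg_X (f : R[X]) :
    f - f.comp (-X) = C 2 * X * expand R 2 (contract 2 f.divX) := by
  ext n
  rcases n with _ | n
  · simp [coeff_comp_neg_X]
  · rw [coeff_sub, coeff_comp_neg_X, mul_assoc, coeff_C_mul, coeff_X_mul, coeff_expand two_pos]
    obtain ⟨l, rfl | rfl⟩ := Nat.even_or_odd' n
    · simpa [coeff_contract, coeff_divX, pow_succ, pow_mul, mul_comm l 2] using
        (two_mul (f.coeff (2 * l + 1))).symm
    · simp [pow_succ, pow_mul]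

theorem eval_sub_eval_neg (f : R[X]) (y : R) :
    f.eval y - f.eval (-y) = 2 * y * (contract 2 f.divX).eval (y ^ 2) := by
  simpa [eval_comp, mul_assoc] using congr_arg (eval y) (sub_comp_neg_X f)

theorem coeff_contract_two_divX (f : R[X]) (l : ℕ) :
    (contract 2 f.divX).coeff l = f.coeff (2 * l + 1) := by
  rw [coeff_contract two_ne_zero, coeff_divX, mul_comm]

theorem natDegree_contract_two_divX [Nontrivial R] (hf : f.Monic) (hd : f.natDegree = 2 * j + 1) :
    (contract 2 f.divX).natDegree = j := by
  refine natDegree_eq_of_le_of_coeff_ne_zero ?_ ?_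
  · refine natDegree_le_iff_coeff_eq_zero.2 fun l hl => ?_
    rw [coeff_contract_two_divX]
    exact coeff_eq_zero_of_natDegree_lt (by rw [hd]; omega)
  · rw [coeff_contract_two_divX, ← hd, hf.coeff_natDegree]
    exact one_ne_zero

theorem monic_contract_two_divX [Nontrivial R] (hf : f.Monic) (hd : f.natDegree = 2 * j + 1) :
    (contract 2 f.divX).Monic := by
  rw [Monic, leadingCoeff, natDegree_contract_two_divX hf hd, coeff_contract_two_divX, ← hd,
    hf.coeff_natDegree]

theorem eval_eq_mul_eval_contract_of_eval_sub {K : Type*} [Field K] [CharZero K] {P : K[X]}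
    {m x : K} (h : P.eval (2 * m - x) = -P.eval x) :
    P.eval x = (x - m) * (contract 2 (P.comp (X + C m)).divX).eval ((x - m) ^ 2) := by
  have hsub := eval_sub_eval_neg (P.comp (X + C m)) (x - m)
  simp only [eval_comp, eval_add, eval_X, eval_C, sub_add_cancel,
    show -(x - m) + m = 2 * m - x by ring, h] at hsub
  linear_combination hsub / 2

end OddPart

noncomputable def weightedInner (S : Finset ℤ) (w : ℤ → ℝ) (f g : ℝ[X]) : ℝ :=
  ∑ x ∈ S, w x * f.eval (x : ℝ) * g.eval (x : ℝ)

section Orthogonal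

variable {S : Finset ℤ} {w : ℤ → ℝ} {p : ℕ → ℝ[X]}

theorem weightedInner_eq_zero_of_degree_lt (hmonic : ∀ k, (p k).Monic)
    (hdeg : ∀ k, (p k).natDegree = k) (horth : ∀ j k, j ≠ k → weightedInner S w (p j) (p k) = 0)
    {k : ℕ} {q : ℝ[X]} (hq : q.degree < k) : weightedInner S w q (p k) = 0 := by
  let P : Sequence ℝ := ⟨p, fun i => by rw [degree_eq_natDegree (hmonic i).ne_zero, hdeg]⟩
  have hspan : q ∈ Submodule.span ℝ (P '' Set.Iio k) := by
    rw [P.span_degreeLT fun i _ => by simp [P, (hmonic i).leadingCoeff]]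
    exact mem_degreeLT.2 hq
  clear hq
  induction hspan using Submodule.span_induction with
  | mem q hq =>
    obtain ⟨i, hi, rfl⟩ := hq
    exact horth i k hi.ne
  | zero => simp [weightedInner]
  | add f g _ _ hf hg =>
    simp only [weightedInner, eval_add, mul_add, add_mul, sum_add_distrib] at hf hg ⊢
    rw [hf, hg, add_zero]
  | smul c f _ hf =>
    simp only [weightedInner, eval_smul, smul_eq_mul] at hf ⊢
    rw [← mul_zero c, ← hf, mul_sum]
    exact sum_congr rfl fun x _ => by ring

theorem eval_eq_zero_of_weightedInner_self_eq_zero (hpos : ∀ x ∈ S, 0 < w x) {q : ℝ[X]}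
    (hq : weightedInner S w q q = 0) {x : ℤ} (hx : x ∈ S) : q.eval (x : ℝ) = 0 := by
  have hnonneg : ∀ t ∈ S, 0 ≤ w t * q.eval (t : ℝ) * q.eval (t : ℝ) := fun t ht => by
    rw [mul_assoc]; exact mul_nonneg (hpos t ht).le (mul_self_nonneg _)
  simpa [(hpos x hx).ne'] using (sum_eq_zero_iff_of_nonneg hnonneg).1 hq x hx

theorem eval_eq_of_monic_orthogonal (hpos : ∀ x ∈ S, 0 < w x) {q : ℕ → ℝ[X]}
    (hpm : ∀ k, (p k).Monic) (hpd : ∀ k, (p k).natDegree = k)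
    (hpo : ∀ j k, j ≠ k → weightedInner S w (p j) (p k) = 0)
    (hqm : ∀ k, (q k).Monic) (hqd : ∀ k, (q k).natDegree = k)
    (hqo : ∀ j k, j ≠ k → weightedInner S w (q j) (q k) = 0) (k : ℕ) {x : ℤ} (hx : x ∈ S) :
    (p k).eval (x : ℝ) = (q k).eval (x : ℝ) := by
  have hlt : (p k - q k).degree < k := by
    convert degree_sub_lt_left _ (hpm k).ne_zero _ using 1
    · rw [degree_eq_natDegree (hpm k).ne_zero, hpd]
    · rw [degree_eq_natDegree (hpm k).ne_zero, degree_eq_natDegree (hqm k).ne_zero, hpd, hqd]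
    · rw [(hpm k).leadingCoeff, (hqm k).leadingCoeff]
  have hnorm : weightedInner S w (p k - q k) (p k - q k) = 0 := by
    have hp := weightedInner_eq_zero_of_degree_lt hpm hpd hpo hlt
    have hq := weightedInner_eq_zero_of_degree_lt hqm hqd hqo hlt
    simp only [weightedInner, eval_sub, mul_sub, sum_sub_distrib] at hp hq ⊢
    rw [hp, hq, sub_zero]
  exact sub_eq_zero.1 (by simpa using eval_eq_zero_of_weightedInner_self_eq_zero hpos hnorm hx)

theorem sum_comp_sub_of_mem {c : ℤ} (hS : ∀ x ∈ S, c - x ∈ S) (f : ℤ → ℝ) :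
    ∑ x ∈ S, f (c - x) = ∑ x ∈ S, f x :=
  sum_nbij' (c - ·) (c - ·) hS hS (fun x _ => sub_sub_cancel c x)
    (fun x _ => sub_sub_cancel c x) fun _ _ => rfl

theorem eval_sub_of_even {c : ℤ} (hS : ∀ x ∈ S, c - x ∈ S) (heven : ∀ x ∈ S, w x = w (c - x))
    (hpos : ∀ x ∈ S, 0 < w x) (hmonic : ∀ k, (p k).Monic) (hdeg : ∀ k, (p k).natDegree = k)
    (horth : ∀ j k, j ≠ k → weightedInner S w (p j) (p k) = 0) (k : ℕ) {x : ℤ} (hx : x ∈ S) :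
    (p k).eval ((c - x : ℤ) : ℝ) = (-1) ^ k * (p k).eval (x : ℝ) := by
  let q : ℕ → ℝ[X] := fun k => (-1) ^ k * ((p k).comp (X + C (c : ℝ))).comp (-X)
  have hq : ∀ k, q k = (-1) ^ k * ((p k).comp (X + C (c : ℝ))).comp (-X) := fun _ => rfl
  have hqeval : ∀ k (y : ℤ), (q k).eval (y : ℝ) = (-1) ^ k * (p k).eval ((c - y : ℤ) : ℝ) :=
    fun k y => by
      simp only [hq, eval_mul, eval_pow, eval_neg, eval_one, eval_comp, eval_add, eval_X, eval_C,
        Int.cast_sub, neg_add_eq_sub]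
  have hshift : ∀ k, ((p k).comp (X + C (c : ℝ))).natDegree = k := fun k => by
    rw [natDegree_comp, natDegree_X_add_C, hdeg, mul_one]
  have hqmonic : ∀ k, (q k).Monic := fun k => by
    rw [hq]
    simpa only [hshift] using
      ((hmonic k).comp_X_add_C (c : ℝ)).neg_one_pow_natDegree_mul_comp_neg_X
  have hqdeg : ∀ k, (q k).natDegree = k := fun k => by
    rw [hq, natDegree_mul (by simp)
      (comp_neg_X_eq_zero_iff.not.2 ((hmonic k).comp_X_add_C (c : ℝ)).ne_zero),
      natDegree_comp, hshift]
    simp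
  have hqorth : ∀ j l, j ≠ l → weightedInner S w (q j) (q l) = 0 := fun j l hjl => by
    have h := horth j l hjl
    rw [weightedInner, ← sum_comp_sub_of_mem hS] at h
    calc weightedInner S w (q j) (q l)
        = (-1) ^ j * (-1) ^ l * ∑ x ∈ S,
            w (c - x) * (p j).eval ((c - x : ℤ) : ℝ) * (p l).eval ((c - x : ℤ) : ℝ) := by
          rw [weightedInner, mul_sum]
          exact sum_congr rfl fun x hx => by rw [hqeval, hqeval, heven x hx]; ring
      _ = 0 := by rw [h, mul_zero]
  rw [eval_eq_of_monic_orthogonal hpos hmonic hdeg horth hqmonic hqdeg hqorth k hx, hqeval,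
    ← mul_assoc, ← pow_add, ← two_mul, pow_mul]
  simp

end Orthogonal

section Interval

variable {a b : ℤ} {w : ℤ → ℝ} {p : ℕ → ℝ[X]}

theorem eval_odd_eq_mul_eval_contract (hpos : ∀ x ∈ Icc a b, 0 < w x)
    (heven : ∀ x ∈ Icc a b, w x = w (a + b - x)) (hmonic : ∀ k, (p k).Monic)
    (hdeg : ∀ k, (p k).natDegree = k)
    (horth : ∀ j k, j ≠ k → weightedInner (Icc a b) w (p j) (p k) = 0) (j : ℕ) {x : ℤ}
    (hx : x ∈ Icc a b) :
    (p (2 * j + 1)).eval (x : ℝ) = ((x : ℝ) - ((a : ℝ) + b) / 2) *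
      (contract 2 ((p (2 * j + 1)).comp (X + C (((a : ℝ) + b) / 2))).divX).eval
        (((x : ℝ) - ((a : ℝ) + b) / 2) ^ 2) := by
  refine eval_eq_mul_eval_contract_of_eval_sub ?_
  have hS : ∀ y ∈ Icc a b, a + b - y ∈ Icc a b := fun y hy => by simp only [mem_Icc] at hy ⊢; omega
  rw [show 2 * (((a : ℝ) + b) / 2) - x = ((a + b - x : ℤ) : ℝ) by push_cast; ring,
    eval_sub_of_even hS heven hpos hmonic hdeg horth _ hx, pow_succ, pow_mul]
  simp

theorem det_eval_odd_sq (hpos : ∀ x ∈ Icc a b, 0 < w x)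
    (heven : ∀ x ∈ Icc a b, w x = w (a + b - x)) (hmonic : ∀ k, (p k).Monic)
    (hdeg : ∀ k, (p k).natDegree = k)
    (horth : ∀ j k, j ≠ k → weightedInner (Icc a b) w (p j) (p k) = 0) {n : ℕ}
    (x : Fin n → Icc a b) :
    (Matrix.of fun i (j : Fin n) => (p (2 * j + 1)).eval (x i : ℝ)).det ^ 2 =
      (∏ i, ∏ j, if i < j then ((x i : ℝ) - ((a : ℝ) + b) / 2) ^ 2 -
        ((x j : ℝ) - ((a : ℝ) + b) / 2) ^ 2 else 1) ^ 2 *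
      ∏ i, ((x i : ℝ) - ((a : ℝ) + b) / 2) ^ 2 := by
  have hshift : ∀ k, ((p k).comp (X + C (((a : ℝ) + b) / 2))).natDegree = k := fun k => by
    rw [natDegree_comp, natDegree_X_add_C, hdeg, mul_one]
  simp only [fun i (j : Fin n) =>
    eval_odd_eq_mul_eval_contract hpos heven hmonic hdeg horth j (x i).2]
  rw [det_mul_eval_eq_prod_mul_prod_sub _ _ _
    (fun j => natDegree_contract_two_divX ((hmonic _).comp_X_add_C _) (hshift _))
    (fun j => monic_contract_two_divX ((hmonic _).comp_X_add_C _) (hshift _)),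
    prod_ite_lt_sub_sq, prod_pow]
  ring

end Interval

theorem stmt_15_general (a b : ℤ) (w : ℤ → ℝ)
    (hpos : ∀ x ∈ Finset.Icc a b, 0 < w x)
    (heven : ∀ x ∈ Finset.Icc a b, w x = w (a + b - x))
    (p : ℕ → Polynomial ℝ)
    (hmonic : ∀ k, (p k).Monic)
    (hdeg : ∀ k, (p k).natDegree = k)
    (horth : ∀ j k, j ≠ k →
      ∑ x ∈ Finset.Icc a b, w x * (p j).eval (x : ℝ) * (p k).eval (x : ℝ) = 0)
    (n : ℕ) :
    ∑ x : Fin n → {t : ℤ // t ∈ Finset.Icc a b},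
      (∏ i, w (x i)) *
        (∏ i : Fin n, ∏ j : Fin n, if i < j then
          (((x i : ℤ) : ℝ) - ((a : ℝ) + (b : ℝ)) / 2) ^ 2 -
            (((x j : ℤ) : ℝ) - ((a : ℝ) + (b : ℝ)) / 2) ^ 2 else 1) ^ 2 *
        (∏ i : Fin n, (((x i : ℤ) : ℝ) - ((a : ℝ) + (b : ℝ)) / 2) ^ 2)
    = (Nat.factorial n : ℝ) *
        ∏ j ∈ Finset.range n,
          ∑ t ∈ Finset.Icc a b, w t * (p (2 * j + 1)).eval (t : ℝ) ^ 2 := by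
  have hgram : ∀ j k : Fin n, j ≠ k →
      ∑ t : Icc a b, w t * (p (2 * j + 1)).eval (t : ℝ) * (p (2 * k + 1)).eval (t : ℝ) = 0 :=
    fun j k hjk => by
      rw [sum_coe_sort (Icc a b) fun t => w t * (p _).eval (t : ℝ) * (p _).eval (t : ℝ)]
      exact horth _ _ (by have := Fin.val_injective.ne hjk; omega)
  rw [sum_congr rfl fun x _ => by rw [mul_assoc, ← det_eval_odd_sq hpos heven hmonic hdeg horth x],
    sum_prod_mul_det_sq_of_orthogonal n (fun t : Icc a b => w t)
      (fun j t => (p (2 * j + 1)).eval (t : ℝ)) hgram, ← Fin.prod_univ_eq_prod_range]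
  exact congr_arg _ (prod_congr rfl fun j _ => (sum_subtype (Icc a b) (fun _ => Iff.rfl)
    fun t => w t * (p (2 * j + 1)).eval (t : ℝ) ^ 2).symm)

/-- Let `a < b` be integers and `w` a positive weight on
`{a,…,b}`, even about the midpoint `m = (a+b)/2` (i.e. `w x = w (a+b-x)`).
Let `(p_k)` be the monic orthogonal polynomials for `w`.  Then for `n ≥ 1`,
`∑_{x₁,…,x_n=a}^{b} w(x₁)⋯w(x_n) (∏_{i<j}((x_i-m)² - (x_j-m)²))² ∏_i (x_i-m)²
  = n! ∏_{j=0}^{n-1} (p_{2j+1}, p_{2j+1})`,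
where `(p_j, p_j) = ∑_{x=a}^b w(x) p_j(x)²`. -/
theorem stmt_15 (a b : ℤ) (hab : a < b) (w : ℤ → ℝ)
    (hpos : ∀ x ∈ Finset.Icc a b, 0 < w x)
    (heven : ∀ x ∈ Finset.Icc a b, w x = w (a + b - x))
    (p : ℕ → Polynomial ℝ)
    (hmonic : ∀ k, (p k).Monic)
    (hdeg : ∀ k, (p k).natDegree = k)
    (horth : ∀ j k, j ≠ k →
      ∑ x ∈ Finset.Icc a b, w x * (p j).eval (x : ℝ) * (p k).eval (x : ℝ) = 0)
    (n : ℕ) (hn : 1 ≤ n) :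
    ∑ x : Fin n → {t : ℤ // t ∈ Finset.Icc a b},
      (∏ i, w (x i)) *
        (∏ i : Fin n, ∏ j : Fin n, if i < j then
          (((x i : ℤ) : ℝ) - ((a : ℝ) + (b : ℝ)) / 2) ^ 2 -
            (((x j : ℤ) : ℝ) - ((a : ℝ) + (b : ℝ)) / 2) ^ 2 else 1) ^ 2 *
        (∏ i : Fin n, (((x i : ℤ) : ℝ) - ((a : ℝ) + (b : ℝ)) / 2) ^ 2)
    = (Nat.factorial n : ℝ) *
        ∏ j ∈ Finset.range n,
          ∑ t ∈ Finset.Icc a b, w t * (p (2 * j + 1)).eval (t : ℝ) ^ 2 :=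
  stmt_15_general a b w hpos heven p hmonic hdeg horth n
end

section
/- For all integers M ≥ 0 and 1 ≤ n ≤ M+1: ∑_{x_1=1}^{M+1} ⋯ ∑_{x_n=1}^{M+1} ∏_{i=1}^{n} 1/((M+x_i)! (M+1−x_i)!) · (∏_{1≤i<j≤n} ((x_i − 1/2)^2 − (x_j − 1/2)^2))^2 = n! · 2^{2Mn} · ∏_{j=0}^{n−1} (2j)! / (2^{4j} (2(M−j)+1)!). -/
/-!
Write `yᵢ = (xᵢ - 1/2)²`. The squared product is the squared Vandermonde determinant in the
`yᵢ`, which equals the squared determinant of `(R_j(y_{x_i}))` for any monic `R_j` of degree `j`,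
and Andreief's identity turns the weighted sum of such squares into `n!` times the Gram determinant
of the `R_j`. Take `R_j` with `R_j((x - 1/2)²) = K_{2j}(M + x)`, where `K_d` is the monic
Krawtchouk polynomial for the weight `1/(k! (N-k)!)` on `{0, …, N}`, `N = 2M + 1`: even-degree
`K_d` are symmetric about `N/2 = M + 1/2`, so the sum over `x ∈ {1, …, M+1}` is half the sum over
the whole lattice, and the Gram matrix is diagonal with entries half the squared norms
`d! 2^(N-d) / (2^d (N-d)!)`. These come from a Rodrigues formula: the weight times `K_d` is a
`d`-th difference of the weight of `{0, …, N-d}`, so summing by parts against a polynomial of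
degree at most `d` leaves `d!` times its coefficient of `X^d`.
-/

open Finset Polynomial Matrix
open scoped Nat fwdDiff

section Determinants

variable {R α : Type*} [CommRing R]

theorem sq_prod_sub_eq_sq_det_eval {n : ℕ} (v : Fin n → R) (p : Fin n → R[X])
    (h_deg : ∀ i, (p i).natDegree = i) (h_monic : ∀ i, (p i).Monic) :
    (∏ i, ∏ j, if i < j then v i - v j else 1) ^ 2 =
      det (of fun i j => (p j).eval (v i)) ^ 2 := by
  rw [← det_eval_matrixOfPolynomials_eq_det_vandermonde v p h_deg h_monic, det_vandermonde,
    ← prod_pow, ← prod_pow]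
  refine prod_congr rfl fun i _ => ?_
  rw [← prod_pow, ← prod_pow, ← filter_lt_eq_Ioi, prod_filter]
  refine prod_congr rfl fun j _ => ?_
  split_ifs
  · exact sub_sq_comm _ _
  · exact one_pow 2

variable [Fintype α] {n : ℕ}

theorem sum_prod_mul_det_eq_det_sum (c f : Fin n → α → R) :
    ∑ x : Fin n → α, (∏ i, c i (x i)) * det (of fun i j => f j (x i)) =
      det (of fun i j => ∑ s, c i s * f j s) := by
  have h := (detRowAlternating (n := Fin n) (R := R)).toMultilinearMap.map_sum
    (fun i s => c i s • fun j => f j s)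
  simp only [AlternatingMap.coe_multilinearMap] at h
  convert h.symm using 1
  · refine Fintype.sum_congr _ _ fun x => ?_
    rw [← det_mul_column]
    rfl
  · congr 1
    ext i j
    simp [Finset.sum_apply]

theorem sum_prod_mul_det_mul_det (w : α → R) (f g : Fin n → α → R) :
    ∑ x : Fin n → α, (∏ i, w (x i)) * det (of fun i j => f j (x i)) *
        det (of fun i j => g j (x i)) =
      n ! * ∑ x : Fin n → α, (∏ i, w (x i) * g i (x i)) * det (of fun i j => f j (x i)) := by
  -- Expanding the second determinant over `τ`, the substitution `x ↦ x ∘ τ⁻¹` shows that every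
  -- `τ` contributes the same sum.
  have hτ : ∀ τ : Equiv.Perm (Fin n),
      ∑ x : Fin n → α, (∏ i, w (x i)) * det (of fun i j => f j (x i)) *
          (Equiv.Perm.sign τ • ∏ i, g i (x (τ i))) =
        ∑ x : Fin n → α, (∏ i, w (x i) * g i (x i)) * det (of fun i j => f j (x i)) := by
    intro τ
    rw [← (Equiv.arrowCongr τ (Equiv.refl α)).sum_comp]
    refine Fintype.sum_congr _ _ fun y => ?_
    have hy : ∀ i, (Equiv.arrowCongr τ (Equiv.refl α)) y i = y (τ⁻¹ i) := fun _ => rfl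
    have hyτ : ∀ i, y (τ⁻¹ (τ i)) = y i := fun i => by simp
    simp only [hy, hyτ]
    have hdet : det (of fun i j => f j (y (τ⁻¹ i))) =
        Equiv.Perm.sign τ⁻¹ * det (of fun i j => f j (y i)) :=
      det_permute τ⁻¹ (of fun i j => f j (y i))
    rw [hdet, Equiv.prod_comp τ⁻¹ (fun i => w (y i)), prod_mul_distrib,
      Equiv.Perm.sign_inv, Units.smul_def]
    have : ((Equiv.Perm.sign τ : ℤ) : R) * (Equiv.Perm.sign τ : ℤ) = 1 := by
      rw [← Int.cast_mul, ← Units.val_mul, Int.units_mul_self, Units.val_one, Int.cast_one]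
    rw [zsmul_eq_mul]
    linear_combination (∏ i, w (y i)) * det (of fun i j => f j (y i)) * (∏ i, g i (y i)) * this
  have hdet : ∀ x : Fin n → α,
      det (of fun i j => g j (x i)) = ∑ τ, Equiv.Perm.sign τ • ∏ i, g i (x (τ i)) :=
    fun x => det_apply _
  simp_rw [hdet, mul_sum]
  rw [sum_comm]
  simp_rw [hτ, sum_const, card_univ, Fintype.card_perm, Fintype.card_fin, nsmul_eq_mul, mul_sum]

theorem sum_prod_mul_det_mul_det_eq_factorial_mul_det (w : α → R) (f g : Fin n → α → R) :
    ∑ x : Fin n → α, (∏ i, w (x i)) * det (of fun i j => f j (x i)) *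
        det (of fun i j => g j (x i)) =
      n ! * det (of fun a b => ∑ s, w s * f a s * g b s) := by
  rw [sum_prod_mul_det_mul_det, sum_prod_mul_det_eq_det_sum (fun i s => w s * g i s),
    ← det_transpose]
  congr 2
  ext a b
  simp only [transpose_apply, of_apply]
  exact sum_congr rfl fun s _ => by ring

end Determinants

section EvenPolynomial

variable {R : Type*} [CommRing R] [IsDomain R] [CharZero R]

theorem coeff_eq_zero_of_comp_neg_X_eq {u : R[X]} (hu : u.comp (-X) = u) {k : ℕ}
    (hk : Odd k) : u.coeff k = 0 := by
  have h := congrArg (coeff · k) hu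
  rw [show (-X : R[X]) = C (-1) * X by simp, comp_C_mul_X_coeff, hk.neg_one_pow] at h
  have h2 : (2 : R) * u.coeff k = 0 := by linear_combination -h
  simpa using h2

theorem expand_contract_of_comp_neg_X_eq {u : R[X]} (hu : u.comp (-X) = u) :
    expand R 2 (contract 2 u) = u := by
  ext k
  rw [coeff_expand two_pos, coeff_contract two_ne_zero]
  split_ifs with h
  · rw [Nat.div_mul_cancel h]
  · exact (coeff_eq_zero_of_comp_neg_X_eq hu (Nat.odd_iff.2 (by omega))).symm

theorem exists_monic_comp_sq_of_comp_reflect_eq {p : R[X]} (hp : p.Monic) (c : R)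
    (hsym : p.comp (C (2 * c) - X) = p) :
    ∃ r : R[X], r.Monic ∧ r.natDegree * 2 = p.natDegree ∧ p = r.comp ((X - C c) ^ 2) := by
  set u := p.comp (X + C c)
  have hu : u.comp (-X) = u := by
    have hshift : (X + C c).comp (-X) = (C (2 * c) - X).comp (X + C c) := by
      simp only [add_comp, sub_comp, X_comp, C_comp, two_mul, C_add]
      ring
    simp only [u, comp_assoc, hshift]
    rw [← comp_assoc, hsym]
  have hpu : p = u.comp (X - C c) := by simp [u, comp_assoc]
  have hexp := expand_contract_of_comp_neg_X_eq hu
  refine ⟨contract 2 u, ?_, ?_, ?_⟩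
  · rw [← monic_expand_iff two_pos, hexp]
    exact hp.comp (monic_X_add_C c) (by simp)
  · rw [← natDegree_expand, hexp, natDegree_comp, natDegree_X_add_C, mul_one]
  · rw [← X_pow_comp (p := X - C c), ← comp_assoc, ← expand_eq_comp_X_pow, hexp, ← hpu]

end EvenPolynomial

theorem sum_range_eq_two_nsmul_sum_Icc {M : Type*} [AddCommMonoid M] (m : ℕ) (f : ℕ → M)
    (hf : ∀ k ≤ 2 * m + 1, f (2 * m + 1 - k) = f k) :
    ∑ k ∈ range (2 * m + 2), f k = 2 • ∑ s ∈ Icc 1 (m + 1), f (m + s) := by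
  have hIcc : ∑ s ∈ Icc 1 (m + 1), f (m + s) = ∑ k ∈ range (m + 1), f (m + 1 + k) := by
    rw [← Ico_add_one_right_eq_Icc, sum_Ico_eq_sum_range, Nat.add_sub_cancel]
    exact sum_congr rfl fun k _ => by rw [← add_assoc]
  have hlow : ∑ k ∈ range (m + 1), f k = ∑ k ∈ range (m + 1), f (m + 1 + k) := by
    rw [← sum_range_reflect]
    refine sum_congr rfl fun k hk => ?_
    rw [mem_range] at hk
    rw [← hf (m + 1 + k) (by omega)]
    congr 1
    omega
  rw [show 2 * m + 2 = (m + 1) + (m + 1) by ring, sum_range_add, hlow, hIcc, two_nsmul]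

noncomputable def binomialWeight (N k : ℕ) : ℝ := 1 / ((k ! * (N - k)! : ℕ) : ℝ)

theorem binomialWeight_reflect {N k : ℕ} (hk : k ≤ N) :
    binomialWeight N (N - k) = binomialWeight N k := by
  rw [binomialWeight, binomialWeight, Nat.sub_sub_self hk, mul_comm]

theorem sum_binomialWeight (L : ℕ) :
    ∑ k ∈ range (L + 1), binomialWeight L k = 2 ^ L / L ! := by
  have hterm : ∀ k ∈ range (L + 1), binomialWeight L k = L.choose k / L ! := fun k hk => by
    have hkL : k ≤ L := Nat.lt_succ_iff.1 (mem_range.1 hk)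
    rw [binomialWeight, ← Nat.choose_mul_factorial_mul_factorial hkL]
    have : (L.choose k : ℝ) ≠ 0 := by exact_mod_cast (Nat.choose_pos hkL).ne'
    push_cast
    field_simp
  rw [sum_congr rfl hterm, ← sum_div, ← Nat.cast_sum, Nat.sum_range_choose, Nat.cast_pow,
    Nat.cast_two]

theorem binomialWeight_mul_descFactorial {N d j m : ℕ} (hj : j ≤ d) (hm : m + d ≤ N) :
    binomialWeight N (m + j) * ((m + j).descFactorial j * (N - (m + j)).descFactorial (d - j)) =
      binomialWeight (N - d) m := by
  have h₁ : m ! * (m + j).descFactorial j = (m + j)! := by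
    simpa using Nat.factorial_mul_descFactorial (Nat.le_add_left j m)
  have h₂ : (N - d - m)! * (N - (m + j)).descFactorial (d - j) = (N - (m + j))! := by
    rw [← Nat.factorial_mul_descFactorial (show d - j ≤ N - (m + j) by omega)]
    congr 2
    omega
  have h₃ : ((m + j).descFactorial j : ℝ) ≠ 0 := by
    exact_mod_cast (Nat.descFactorial_pos.2 (Nat.le_add_left j m)).ne'
  have h₄ : ((N - (m + j)).descFactorial (d - j) : ℝ) ≠ 0 := by
    exact_mod_cast (Nat.descFactorial_pos.2 (show d - j ≤ N - (m + j) by omega)).ne'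
  rw [binomialWeight, binomialWeight, ← h₁, ← h₂]
  push_cast
  field_simp

theorem sum_binomialWeight_mul_descFactorial (g : ℕ → ℝ) {N d j : ℕ} (hj : j ≤ d)
    (hd : d ≤ N) :
    ∑ k ∈ range (N + 1),
        binomialWeight N k * (k.descFactorial j * (N - k).descFactorial (d - j)) * g k =
      ∑ m ∈ range (N - d + 1), binomialWeight (N - d) m * g (m + j) := by
  have hsub : Ico j (N - d + j + 1) ⊆ range (N + 1) := by
    intro k hk
    simp only [mem_Ico, mem_range] at hk ⊢
    omega
  rw [← sum_subset hsub fun k hk hk' => ?_, sum_Ico_eq_sum_range,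
    show N - d + j + 1 - j = N - d + 1 by omega]
  · refine sum_congr rfl fun m hm => ?_
    rw [mem_range] at hm
    rw [add_comm j m, binomialWeight_mul_descFactorial hj (by omega)]
  · simp only [mem_Ico, mem_range, not_and_or, not_le, not_lt] at hk hk'
    have : k.descFactorial j * (N - k).descFactorial (d - j) = 0 := by
      rcases hk' with h | h
      · rw [Nat.descFactorial_eq_zero_iff_lt.2 h, zero_mul]
      · rw [Nat.descFactorial_eq_zero_iff_lt.2 (show N - k < d - j by omega), mul_zero]
    rw [← Nat.cast_mul, this, Nat.cast_zero, mul_zero, zero_mul]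

/-- The monic Krawtchouk polynomial of degree `d` for `p = 1/2` on `{0, …, N}`, written as
`2⁻ᵈ ∑ⱼ (d choose j) x^{(j)} (x - N)^{(d-j)}` with falling and rising factorials. -/
noncomputable def krawtchouk (N d : ℕ) : ℝ[X] :=
  C ((2 : ℝ) ^ d)⁻¹ * ∑ j ∈ range (d + 1),
    C (d.choose j : ℝ) * (descPochhammer ℝ j * (ascPochhammer ℝ (d - j)).comp (X - C (N : ℝ)))

theorem monic_descPochhammer_mul_ascPochhammer_comp (N : ℝ) {d j : ℕ} (hj : j ≤ d) :
    (descPochhammer ℝ j * (ascPochhammer ℝ (d - j)).comp (X - C N)).Monic ∧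
      (descPochhammer ℝ j * (ascPochhammer ℝ (d - j)).comp (X - C N)).natDegree = d := by
  have hasc := (monic_ascPochhammer ℝ (d - j)).comp (monic_X_sub_C N) (by simp)
  refine ⟨(monic_descPochhammer ℝ j).mul hasc, ?_⟩
  rw [(monic_descPochhammer ℝ j).natDegree_mul hasc, descPochhammer_natDegree, natDegree_comp,
    ascPochhammer_natDegree, natDegree_X_sub_C, mul_one]
  omega

theorem krawtchouk_natDegree_le (N d : ℕ) : (krawtchouk N d).natDegree ≤ d := by
  refine (natDegree_C_mul_le _ _).trans (natDegree_sum_le_of_forall_le _ _ fun j hj => ?_)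
  exact (natDegree_C_mul_le _ _).trans
    (monic_descPochhammer_mul_ascPochhammer_comp N (Nat.lt_succ_iff.1 (mem_range.1 hj))).2.le

theorem krawtchouk_coeff_self (N d : ℕ) : (krawtchouk N d).coeff d = 1 := by
  have hterm : ∀ j ∈ range (d + 1),
      (C (d.choose j : ℝ) * (descPochhammer ℝ j *
        (ascPochhammer ℝ (d - j)).comp (X - C (N : ℝ)))).coeff d = d.choose j := fun j hj => by
    obtain ⟨hmonic, hdeg⟩ :=
      monic_descPochhammer_mul_ascPochhammer_comp N (Nat.lt_succ_iff.1 (mem_range.1 hj))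
    have hlead := hmonic.coeff_natDegree
    rw [hdeg] at hlead
    rw [coeff_C_mul, hlead, mul_one]
  rw [krawtchouk, coeff_C_mul, finsetSum_coeff, sum_congr rfl hterm, ← Nat.cast_sum,
    Nat.sum_range_choose, Nat.cast_pow, Nat.cast_two, inv_mul_cancel₀ (by positivity)]

theorem krawtchouk_monic (N d : ℕ) : (krawtchouk N d).Monic :=
  monic_of_natDegree_le_of_coeff_eq_one d (krawtchouk_natDegree_le N d) (krawtchouk_coeff_self N d)

theorem krawtchouk_natDegree (N d : ℕ) : (krawtchouk N d).natDegree = d :=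
  natDegree_eq_of_le_of_coeff_ne_zero (krawtchouk_natDegree_le N d)
    (by rw [krawtchouk_coeff_self]; exact one_ne_zero)

theorem krawtchouk_eval (N d : ℕ) (x : ℝ) :
    (krawtchouk N d).eval x = ((2 : ℝ) ^ d)⁻¹ * ∑ j ∈ range (d + 1),
      d.choose j * ((descPochhammer ℝ j).eval x * (ascPochhammer ℝ (d - j)).eval (x - N)) := by
  simp [krawtchouk, eval_finsetSum]

theorem krawtchouk_eval_natCast {N k : ℕ} (d : ℕ) (hk : k ≤ N) :
    (krawtchouk N d).eval (k : ℝ) = ((2 : ℝ) ^ d)⁻¹ * ∑ j ∈ range (d + 1),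
      (-1 : ℝ) ^ (d - j) * d.choose j *
        (k.descFactorial j * (N - k).descFactorial (d - j) : ℝ) := by
  rw [krawtchouk_eval]
  refine congrArg _ (sum_congr rfl fun j _ => ?_)
  rw [show (k : ℝ) - N = -((N - k : ℕ) : ℝ) by push_cast [hk]; ring,
    ascPochhammer_eval_neg_eq_descPochhammer, descPochhammer_eval_eq_descFactorial,
    descPochhammer_eval_eq_descFactorial]
  ring

theorem krawtchouk_eval_reflect (N d : ℕ) (x : ℝ) :
    (krawtchouk N d).eval (N - x) = (-1) ^ d * (krawtchouk N d).eval x := by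
  set f : ℕ → ℝ := fun j =>
    d.choose j * ((descPochhammer ℝ j).eval x * (ascPochhammer ℝ (d - j)).eval (x - N))
  have hterm : ∀ j ∈ range (d + 1),
      d.choose j *
          ((descPochhammer ℝ j).eval (N - x) * (ascPochhammer ℝ (d - j)).eval (N - x - N)) =
        (-1) ^ d * f (d + 1 - 1 - j) := fun j hj => by
    have hj : j ≤ d := Nat.lt_succ_iff.1 (mem_range.1 hj)
    have hdesc := ascPochhammer_eval_neg_eq_descPochhammer ℝ ((N : ℝ) - x) j
    have hsq : ((-1 : ℝ) ^ j) ^ 2 = 1 := by rw [← pow_mul, pow_mul', neg_one_sq, one_pow]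
    obtain ⟨i, rfl⟩ : ∃ i, d = j + i := ⟨d - j, by omega⟩
    rw [neg_sub] at hdesc
    simp only [f, Nat.add_sub_cancel, Nat.add_sub_cancel_left,
      show (N : ℝ) - x - N = -x by ring, ascPochhammer_eval_neg_eq_descPochhammer, hdesc, pow_add]
    rw [Nat.choose_symm_add]
    linear_combination -((j + i).choose i * (descPochhammer ℝ j).eval (N - x) * (-1) ^ i *
      (descPochhammer ℝ i).eval x) * hsq
  rw [krawtchouk_eval, sum_congr rfl hterm, ← mul_sum, sum_range_reflect f, krawtchouk_eval]
  ring

theorem krawtchouk_comp_reflect (N d : ℕ) :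
    (krawtchouk N d).comp (C (N : ℝ) - X) = C ((-1) ^ d) * krawtchouk N d :=
  Polynomial.funext fun x => by simp [eval_comp, krawtchouk_eval_reflect]

noncomputable def krawtchoukNormSq (N d : ℕ) : ℝ := d ! * 2 ^ (N - d) / (2 ^ d * (N - d)!)

theorem fwdDiff_iter_eval_eq_coeff_mul_factorial {R : Type*} [CommRing R] {q : R[X]} {d : ℕ}
    (hq : q.natDegree ≤ d) (x : R) : (Δ_[1])^[d] q.eval x = q.coeff d * d ! := by
  rcases hq.lt_or_eq with hlt | rfl
  · rw [fwdDiff_iter_eq_zero_of_degree_lt hlt, coeff_eq_zero_of_natDegree_lt hlt, zero_mul]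
    rfl
  · rw [fwdDiff_iter_degree_eq_factorial]
    simp [coeff_natDegree]

theorem sum_binomialWeight_mul_krawtchouk_mul_eval {N d : ℕ} (hd : d ≤ N) {q : ℝ[X]}
    (hq : q.natDegree ≤ d) :
    ∑ k ∈ range (N + 1), binomialWeight N k * (krawtchouk N d).eval (k : ℝ) * q.eval (k : ℝ) =
      q.coeff d * krawtchoukNormSq N d := by
  have hΔ : ∀ m : ℕ,
      ∑ j ∈ range (d + 1), (-1 : ℝ) ^ (d - j) * d.choose j * q.eval ((m + j : ℕ) : ℝ) =
        q.coeff d * d ! := fun m => by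
    rw [← fwdDiff_iter_eval_eq_coeff_mul_factorial hq (m : ℝ), fwdDiff_iter_eq_sum_shift]
    refine sum_congr rfl fun j _ => ?_
    simp
  calc _ = ((2 : ℝ) ^ d)⁻¹ * ∑ j ∈ range (d + 1), (-1 : ℝ) ^ (d - j) * d.choose j *
        ∑ k ∈ range (N + 1), binomialWeight N k *
          (k.descFactorial j * (N - k).descFactorial (d - j)) * q.eval (k : ℝ) := by
        rw [sum_congr rfl fun k hk => by
          rw [krawtchouk_eval_natCast d (Nat.lt_succ_iff.1 (mem_range.1 hk))]]
        simp_rw [mul_sum, sum_mul]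
        rw [sum_comm]
        exact sum_congr rfl fun j _ => sum_congr rfl fun k _ => by ring
    _ = ((2 : ℝ) ^ d)⁻¹ * ∑ m ∈ range (N - d + 1), binomialWeight (N - d) m *
        ∑ j ∈ range (d + 1), (-1 : ℝ) ^ (d - j) * d.choose j * q.eval ((m + j : ℕ) : ℝ) := by
        rw [sum_congr rfl fun j hj => by
          rw [sum_binomialWeight_mul_descFactorial _ (Nat.lt_succ_iff.1 (mem_range.1 hj)) hd]]
        simp_rw [mul_sum]
        rw [sum_comm]
        exact sum_congr rfl fun m _ => sum_congr rfl fun j _ => by ring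
    _ = _ := by
        simp_rw [hΔ, ← sum_mul, sum_binomialWeight, krawtchoukNormSq]
        field_simp

theorem sum_binomialWeight_mul_krawtchouk_mul_krawtchouk {N d e : ℕ} (hd : d ≤ N)
    (he : e ≤ N) :
    ∑ k ∈ range (N + 1),
        binomialWeight N k * (krawtchouk N d).eval (k : ℝ) * (krawtchouk N e).eval (k : ℝ) =
      if d = e then krawtchoukNormSq N d else 0 := by
  wlog hed : e ≤ d generalizing d e
  · rw [sum_congr rfl fun k _ => mul_right_comm _ _ _, this he hd (le_of_not_ge hed),
      if_neg (Ne.symm (by omega)), if_neg (by omega)]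
  rw [sum_binomialWeight_mul_krawtchouk_mul_eval hd ((krawtchouk_natDegree_le N e).trans hed)]
  rcases hed.lt_or_eq with hlt | rfl
  · rw [coeff_eq_zero_of_natDegree_lt ((krawtchouk_natDegree N e).trans_lt hlt), if_neg hlt.ne']
    simp
  · rw [krawtchouk_coeff_self, if_pos rfl, one_mul]

theorem sum_Icc_binomialWeight_mul_krawtchouk_mul_krawtchouk {M a b : ℕ} (ha : a ≤ M)
    (hb : b ≤ M) :
    ∑ s ∈ Icc 1 (M + 1), binomialWeight (2 * M + 1) (M + s) *
        (krawtchouk (2 * M + 1) (2 * a)).eval ((M + s : ℕ) : ℝ) *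
        (krawtchouk (2 * M + 1) (2 * b)).eval ((M + s : ℕ) : ℝ) =
      if a = b then krawtchoukNormSq (2 * M + 1) (2 * a) / 2 else 0 := by
  set f : ℕ → ℝ := fun k => binomialWeight (2 * M + 1) k *
    (krawtchouk (2 * M + 1) (2 * a)).eval (k : ℝ) * (krawtchouk (2 * M + 1) (2 * b)).eval (k : ℝ)
  have hf : ∀ k ≤ 2 * M + 1, f (2 * M + 1 - k) = f k := fun k hk => by
    simp only [f, binomialWeight_reflect hk, Nat.cast_sub hk, krawtchouk_eval_reflect,
      (even_two_mul _).neg_one_pow, one_mul]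
  have hhalf := sum_range_eq_two_nsmul_sum_Icc M f hf
  rw [sum_binomialWeight_mul_krawtchouk_mul_krawtchouk (by omega) (by omega)] at hhalf
  simp only [Nat.mul_left_cancel_iff two_pos, two_nsmul, f] at hhalf
  split_ifs at hhalf ⊢ <;> linarith

theorem exists_monic_eval_sq_eq_krawtchouk (M j : ℕ) :
    ∃ r : ℝ[X], r.Monic ∧ r.natDegree = j ∧ ∀ s : ℕ, r.eval (((s : ℝ) - 1 / 2) ^ 2) =
      (krawtchouk (2 * M + 1) (2 * j)).eval ((M + s : ℕ) : ℝ) := by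
  have hsym : (krawtchouk (2 * M + 1) (2 * j)).comp (C (2 * (((2 * M + 1 : ℕ) : ℝ) / 2)) - X) =
      krawtchouk (2 * M + 1) (2 * j) := by
    rw [mul_div_cancel₀ _ two_ne_zero, krawtchouk_comp_reflect, (even_two_mul j).neg_one_pow,
      C_1, one_mul]
  obtain ⟨r, hmonic, hdeg, hr⟩ :=
    exists_monic_comp_sq_of_comp_reflect_eq (krawtchouk_monic _ _) _ hsym
  refine ⟨r, hmonic, by rw [krawtchouk_natDegree] at hdeg; omega, fun s => ?_⟩
  rw [hr, eval_comp]
  simp only [eval_pow, eval_sub, eval_X, eval_C]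
  push_cast
  ring_nf

theorem prod_range_krawtchoukNormSq_div_two {M n : ℕ} (hn : n ≤ M + 1) :
    ∏ j ∈ range n, krawtchoukNormSq (2 * M + 1) (2 * j) / 2 =
      2 ^ (2 * M * n) * ∏ j ∈ range n, ((2 * j)! / (2 ^ (4 * j) * (2 * (M - j) + 1)!) : ℝ) := by
  have hfactor : ∀ j ∈ range n, krawtchoukNormSq (2 * M + 1) (2 * j) / 2 =
      2 ^ (2 * M) * ((2 * j)! / (2 ^ (4 * j) * (2 * (M - j) + 1)!) : ℝ) := fun j hj => by
    rw [mem_range] at hj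
    obtain ⟨t, rfl⟩ := Nat.exists_eq_add_of_le (show j ≤ M by omega)
    rw [krawtchoukNormSq, show 2 * (j + t) + 1 - 2 * j = 2 * t + 1 by omega,
      Nat.add_sub_cancel_left, show 2 * (j + t) = 2 * t + 2 * j by ring,
      show 4 * j = 2 * j + 2 * j by ring]
    simp only [pow_add, pow_one]
    field_simp
  rw [prod_congr rfl hfactor, prod_mul_distrib, prod_const, card_range, ← pow_mul]

theorem stmt_16_general (M n : ℕ) (hnM : n ≤ M + 1) :
    ∑ x : Fin n → {t : ℕ // t ∈ Finset.Icc 1 (M + 1)},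
      (∏ i : Fin n,
        (1 : ℝ) / ((Nat.factorial (M + (x i : ℕ)) * Nat.factorial (M + 1 - (x i : ℕ)) : ℕ) : ℝ)) *
        (∏ i : Fin n, ∏ j : Fin n, if i < j then
          (((x i : ℕ) : ℝ) - 1 / 2) ^ 2 - (((x j : ℕ) : ℝ) - 1 / 2) ^ 2 else 1) ^ 2
    = (Nat.factorial n : ℝ) * (2 : ℝ) ^ (2 * M * n) *
        ∏ j ∈ Finset.range n,
          ((Nat.factorial (2 * j) : ℝ) /
            ((2 : ℝ) ^ (4 * j) * (Nat.factorial (2 * (M - j) + 1) : ℝ))) := by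
  choose R hRmonic hRdeg hReval using fun j : Fin n => exists_monic_eval_sq_eq_krawtchouk M j
  have hw : ∀ s : ℕ,
      binomialWeight (2 * M + 1) (M + s) = 1 / (((M + s)! * (M + 1 - s)! : ℕ) : ℝ) :=
    fun s => by rw [binomialWeight, show 2 * M + 1 - (M + s) = M + 1 - s by omega]
  set w : {t : ℕ // t ∈ Icc 1 (M + 1)} → ℝ :=
    fun s => 1 / (((M + s)! * (M + 1 - s)! : ℕ) : ℝ)
  set g : Fin n → {t : ℕ // t ∈ Icc 1 (M + 1)} → ℝ :=
    fun j s => (R j).eval ((s - 1 / 2) ^ 2)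
  calc _ = ∑ x : Fin n → {t : ℕ // t ∈ Icc 1 (M + 1)},
        (∏ i, w (x i)) * det (of fun i j => g j (x i)) * det (of fun i j => g j (x i)) := by
        refine sum_congr rfl fun x _ => ?_
        rw [sq_prod_sub_eq_sq_det_eval _ R hRdeg hRmonic, sq, ← mul_assoc]
    _ = n ! * det (of fun a b => ∑ s, w s * g a s * g b s) :=
        sum_prod_mul_det_mul_det_eq_factorial_mul_det _ _ _
    _ = n ! * det (diagonal fun a : Fin n => krawtchoukNormSq (2 * M + 1) (2 * a) / 2) := by
        congr 2
        ext a b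
        simp only [of_apply, diagonal_apply, Fin.ext_iff, w, g, hReval, ← hw]
        exact (sum_coe_sort _ _).trans
          (sum_Icc_binomialWeight_mul_krawtchouk_mul_krawtchouk (by omega) (by omega))
    _ = _ := by
        rw [det_diagonal, Fin.prod_univ_eq_prod_range
          (fun a => krawtchoukNormSq (2 * M + 1) (2 * a) / 2) n,
          prod_range_krawtchoukNormSq_div_two hnM, ← mul_assoc]

/-- For integers `M ≥ 0` and `1 ≤ n ≤ M+1`:
`∑_{x₁,…,x_n=1}^{M+1} ∏ᵢ 1/((M+xᵢ)!(M+1-xᵢ)!) ⬝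
  (∏_{i<j}((xᵢ-1/2)² - (xⱼ-1/2)²))²
  = n! ⬝ 2^{2Mn} ⬝ ∏_{j=0}^{n-1} (2j)!/(2^{4j}(2(M-j)+1)!)`. -/
theorem stmt_16 (M n : ℕ) (hn : 1 ≤ n) (hnM : n ≤ M + 1) :
    ∑ x : Fin n → {t : ℕ // t ∈ Finset.Icc 1 (M + 1)},
      (∏ i : Fin n,
        (1 : ℝ) / ((Nat.factorial (M + (x i : ℕ)) * Nat.factorial (M + 1 - (x i : ℕ)) : ℕ) : ℝ)) *
        (∏ i : Fin n, ∏ j : Fin n, if i < j then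
          (((x i : ℕ) : ℝ) - 1 / 2) ^ 2 - (((x j : ℕ) : ℝ) - 1 / 2) ^ 2 else 1) ^ 2
    = (Nat.factorial n : ℝ) * (2 : ℝ) ^ (2 * M * n) *
        ∏ j ∈ Finset.range n,
          ((Nat.factorial (2 * j) : ℝ) /
            ((2 : ℝ) ^ (4 * j) * (Nat.factorial (2 * (M - j) + 1) : ℝ))) :=
  stmt_16_general M n hnM
end

section
/- For every real c with 0 < c ≤ 1/2, the integral ∫_{−c}^{c} u · log(1+2u) / √(c² − u²) du equals (π/2)(1 − √(1 − 4c²)). -/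
/-!
Substituting `u = c sin θ` turns the integral into `∫_{-π/2}^{π/2} c sin θ log (1 + 2c sin θ) dθ`.
For `a = 2c` the integrand `a sin θ log (1 + a sin θ)` has an explicit primitive: integrating by
parts leaves `(1 - a²) ∫ dθ / (1 + a sin θ)`, which the half-angle substitution
`t = tan (θ/2) = sin θ / (1 + cos θ)` turns into an arctangent. At `a = 1` the integrand has a
logarithmic singularity at `-π/2`, but it is nonnegative and its primitive is continuous up to the
endpoint (as `x log x → 0`), so it is integrable and the fundamental theorem of calculus applies.
-/

open Real Set MeasureTheory intervalIntegral

theorem integral_div_sqrt_sq_sub_sq_eq_integral_comp_sin {c : ℝ} (hc : 0 < c) (f : ℝ → ℝ) :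
    ∫ u in (-c)..c, f u / √(c ^ 2 - u ^ 2) = ∫ θ in (-(π / 2))..(π / 2), f (c * sin θ) := by
  have hmono : StrictMonoOn (fun θ => c * sin θ) (Icc (-(π / 2)) (π / 2)) :=
    fun x hx y hy hxy => mul_lt_mul_of_pos_left (strictMonoOn_sin hx hy hxy) hc
  have himage : (fun θ => c * sin θ) '' Ioo (-(π / 2)) (π / 2) = Ioo (-c) c := by
    rw [(by fun_prop : Continuous fun θ => c * sin θ).continuousOn.image_Ioo_of_strictMonoOn
      (by linarith [pi_pos]) hmono]
    simp
  rw [integral_of_le (by linarith), integral_of_le (by linarith [pi_pos]),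
    integral_Ioc_eq_integral_Ioo, integral_Ioc_eq_integral_Ioo, ← himage,
    integral_image_eq_integral_abs_deriv_smul measurableSet_Ioo
      (fun θ _ => ((hasDerivAt_sin θ).const_mul c).hasDerivWithinAt)
      (hmono.injOn.mono Ioo_subset_Icc_self)]
  refine setIntegral_congr_fun measurableSet_Ioo fun θ hθ => ?_
  have hcos : 0 < c * cos θ := mul_pos hc (cos_pos_of_mem_Ioo hθ)
  have hsqrt : √(c ^ 2 - (c * sin θ) ^ 2) = c * cos θ := by
    rw [← sqrt_sq hcos.le]
    congr 1
    linear_combination -c ^ 2 * sin_sq_add_cos_sq θ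
  rw [smul_eq_mul, hsqrt, abs_of_pos hcos, mul_div_cancel₀ _ hcos.ne']

theorem mul_log_one_add_nonneg {x : ℝ} (hx : -1 < x) : 0 ≤ x * log (1 + x) := by
  rcases le_total 0 x with h | h
  · exact mul_nonneg h (log_nonneg (by linarith))
  · exact mul_nonneg_of_nonpos_of_nonpos h (log_nonpos (by linarith) (by linarith))

theorem neg_one_lt_mul_sin {a θ : ℝ} (ha : a ^ 2 ≤ 1) (hθ : θ ∈ Ioo (-(π / 2)) (π / 2)) :
    -1 < a * sin θ := by
  obtain ⟨h₁, h₂⟩ := mapsTo_sin_Ioo hθ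
  nlinarith [mul_nonneg (sub_nonneg.2 ha) (sq_nonneg (sin θ)),
    mul_pos (neg_lt_iff_pos_add.1 h₁) (sub_pos.2 h₂)]

theorem hasDerivAt_arctan_half_angle {a θ : ℝ} (ha : a ^ 2 ≤ 1) (hθ : 1 + cos θ ≠ 0) :
    HasDerivAt (fun θ => 2 * √(1 - a ^ 2) * arctan ((sin θ / (1 + cos θ) + a) / √(1 - a ^ 2)))
      ((1 - a ^ 2) / (1 + a * sin θ)) θ := by
  rcases (sqrt_nonneg (1 - a ^ 2)).eq_or_lt with hk | hk
  · have h0 : 1 - a ^ 2 = 0 := by nlinarith [sq_sqrt (show 0 ≤ 1 - a ^ 2 by linarith)]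
    simpa [← hk, h0] using hasDerivAt_const θ (0 : ℝ)
  have hk2 := sq_sqrt (show 0 ≤ 1 - a ^ 2 by linarith)
  set k := √(1 - a ^ 2)
  have hs : 0 < 1 + a * sin θ := by nlinarith [sin_sq_add_cos_sq θ, sq_nonneg (a * sin θ + 1)]
  have ht : HasDerivAt (fun θ => sin θ / (1 + cos θ)) (1 / (1 + cos θ)) θ := by
    refine ((hasDerivAt_sin θ).fun_div ((hasDerivAt_cos θ).const_add 1) hθ).congr_deriv ?_
    field_simp
    linear_combination sin_sq_add_cos_sq θ
  refine ((((ht.add_const a).div_const k).arctan).const_mul (2 * k)).congr_deriv ?_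
  rw [← hk2]
  field_simp
  rw [eq_div_iff (by linarith)]
  linear_combination -(1 + cos θ) ^ 2 * hk2 - sin_sq_add_cos_sq θ

-- For `a² = 1` the arctangent term vanishes, as `√0 = 0` and `x / 0 = 0`.
noncomputable def sinLogPrimitive (a θ : ℝ) : ℝ :=
  -(a * cos θ * log (1 + a * sin θ)) + a * cos θ + θ
    - 2 * √(1 - a ^ 2) * arctan ((sin θ / (1 + cos θ) + a) / √(1 - a ^ 2))

theorem hasDerivAt_sinLogPrimitive {a θ : ℝ} (ha : a ^ 2 ≤ 1)
    (hθ : θ ∈ Ioo (-(π / 2)) (π / 2)) :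
    HasDerivAt (sinLogPrimitive a) (a * sin θ * log (1 + a * sin θ)) θ := by
  have hs : 0 < 1 + a * sin θ := by linarith [neg_one_lt_mul_sin ha hθ]
  have hc : 1 + cos θ ≠ 0 := by linarith [cos_pos_of_mem_Ioo hθ]
  have hlog : HasDerivAt (fun θ => log (1 + a * sin θ)) (a * cos θ / (1 + a * sin θ)) θ :=
    (((hasDerivAt_sin θ).const_mul a).const_add 1).log hs.ne'
  have hprod := ((hasDerivAt_cos θ).const_mul a).mul hlog
  refine ((hprod.neg.add ((hasDerivAt_cos θ).const_mul a)).add (hasDerivAt_id θ)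
    |>.sub (hasDerivAt_arctan_half_angle ha hc)).congr_deriv ?_
  field_simp
  linear_combination -a ^ 2 * sin_sq_add_cos_sq θ

theorem cos_mul_log_one_add_sin_eq {θ : ℝ} (hθ : θ ∈ Icc (-(π / 2)) (π / 2)) :
    cos θ * log (1 + sin θ) = 2 * √(1 - sin θ) * (√(1 + sin θ) * log √(1 + sin θ)) := by
  have h₁ := neg_one_le_sin θ
  have h₂ := sin_le_one θ
  rw [cos_eq_sqrt_one_sub_sin_sq hθ.1 hθ.2, log_sqrt (by linarith),
    show 1 - sin θ ^ 2 = (1 - sin θ) * (1 + sin θ) by ring, sqrt_mul (by linarith)]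
  ring

theorem continuousOn_cos_mul_log_one_add_mul_sin {a : ℝ} (ha₁ : -1 < a) (ha₂ : a ≤ 1) :
    ContinuousOn (fun θ => cos θ * log (1 + a * sin θ)) (Icc (-(π / 2)) (π / 2)) := by
  rcases ha₂.lt_or_eq with ha₂ | rfl
  · have hpos (θ : ℝ) : 1 + a * sin θ ≠ 0 := by
      have : |a * sin θ| ≤ |a| := by
        rw [abs_mul]; exact mul_le_of_le_one_right (abs_nonneg a) (abs_sin_le_one θ)
      linarith [neg_abs_le (a * sin θ), abs_lt.2 ⟨ha₁, ha₂⟩]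
    exact Continuous.continuousOn (by fun_prop (disch := exact hpos))
  · -- `x log x` is continuous at `x = 0`
    simp only [one_mul]
    exact ContinuousOn.congr (by fun_prop) fun θ hθ => cos_mul_log_one_add_sin_eq hθ

theorem continuousOn_sinLogPrimitive {a : ℝ} (ha₁ : -1 < a) (ha₂ : a ≤ 1) :
    ContinuousOn (sinLogPrimitive a) (Icc (-(π / 2)) (π / 2)) := by
  have hc : ∀ θ ∈ Icc (-(π / 2)) (π / 2), 1 + cos θ ≠ 0 := fun θ hθ => by
    linarith [cos_nonneg_of_mem_Icc hθ]
  have hlog : ContinuousOn (fun θ => a * cos θ * log (1 + a * sin θ))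
      (Icc (-(π / 2)) (π / 2)) := by
    simpa only [mul_assoc] using
      continuousOn_const.fun_mul (continuousOn_cos_mul_log_one_add_mul_sin ha₁ ha₂)
  unfold sinLogPrimitive
  fun_prop (disch := assumption)

theorem sinLogPrimitive_sub {a : ℝ} (ha₁ : -1 < a) (ha₂ : a ≤ 1) :
    sinLogPrimitive a (π / 2) - sinLogPrimitive a (-(π / 2)) = π * (1 - √(1 - a ^ 2)) := by
  simp only [sinLogPrimitive, sin_neg, cos_neg, sin_pi_div_two, cos_pi_div_two, mul_zero, zero_mul,
    neg_zero, add_zero, zero_add, div_one]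
  rcases ha₂.lt_or_eq with ha₂ | rfl
  · have hk : 0 < √(1 - a ^ 2) := sqrt_pos.2 (by nlinarith)
    have hinv : ((1 + a) / √(1 - a ^ 2))⁻¹ = -((-1 + a) / √(1 - a ^ 2)) := by
      rw [inv_div, ← neg_div, div_eq_div_iff (by linarith) hk.ne']
      linear_combination sq_sqrt (show 0 ≤ 1 - a ^ 2 by nlinarith)
    have harctan := arctan_inv_of_pos (div_pos (by linarith : 0 < 1 + a) hk)
    rw [hinv, arctan_neg] at harctan
    linear_combination -2 * √(1 - a ^ 2) * harctan
  · norm_num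

theorem integral_mul_sin_mul_log_one_add_mul_sin {a : ℝ} (ha₁ : -1 < a) (ha₂ : a ≤ 1) :
    ∫ θ in (-(π / 2))..(π / 2), a * sin θ * log (1 + a * sin θ) = π * (1 - √(1 - a ^ 2)) := by
  have hπ : -(π / 2) ≤ π / 2 := by linarith [pi_pos]
  have ha : a ^ 2 ≤ 1 := by nlinarith
  have hcont := continuousOn_sinLogPrimitive ha₁ ha₂
  have hderiv := fun θ (hθ : θ ∈ Ioo (-(π / 2)) (π / 2)) => hasDerivAt_sinLogPrimitive ha hθ
  have hint : IntervalIntegrable (fun θ => a * sin θ * log (1 + a * sin θ)) volume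
      (-(π / 2)) (π / 2) :=
    (intervalIntegrable_iff_integrableOn_Ioc_of_le hπ).2 <| integrableOn_deriv_of_nonneg hcont
      hderiv fun θ hθ => mul_log_one_add_nonneg (neg_one_lt_mul_sin ha hθ)
  rw [integral_eq_sub_of_hasDerivAt_of_le hπ hcont hderiv hint, sinLogPrimitive_sub ha₁ ha₂]

/-- For every real `c` with `0 < c ≤ 1/2`,
`∫_{-c}^{c} u log(1+2u)/√(c²-u²) du = (π/2)(1 - √(1-4c²))`. -/
theorem stmt_18 (c : ℝ) (hc0 : 0 < c) (hc : c ≤ 1 / 2) :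
    ∫ u in (-c)..c, u * Real.log (1 + 2 * u) / Real.sqrt (c ^ 2 - u ^ 2)
      = Real.pi / 2 * (1 - Real.sqrt (1 - 4 * c ^ 2)) := by
  rw [integral_div_sqrt_sq_sub_sq_eq_integral_comp_sin hc0]
  calc ∫ θ in (-(π / 2))..(π / 2), c * sin θ * log (1 + 2 * (c * sin θ))
      = (∫ θ in (-(π / 2))..(π / 2), 2 * c * sin θ * log (1 + 2 * c * sin θ)) / 2 := by
        rw [← intervalIntegral.integral_div]
        congr 1 with θ
        ring_nf
    _ = π / 2 * (1 - √(1 - 4 * c ^ 2)) := by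
        rw [integral_mul_sin_mul_log_one_add_mul_sin (by linarith) (by linarith), mul_pow]
        ring_nf
end

section
/- For every real a with 0 < a < 1, the integral ∫_{−a}^{a} t · log((1+t)/(1−t)) / √(a² − t²) dt equals 2π(1 − √(1 − a²)). -/
/-!
Integrating by parts against `-√(a² - t²)` turns the integral into
`∫ 2√(a² - t²) / (1 - t²) dt`. With `c = √(1 - a²)` this integrand splits as
`2 / √(a² - t²) - 2c² / ((1 - t²)√(a² - t²))`, and both pieces have arcsine primitives,
which gives the explicit antiderivative `arcticAntideriv`. It is odd and continuous on `[-a, a]`,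
with value `π(1 - c)` at `a`. The integrand is nonnegative, so it is integrable despite the
singularities at `±a`, and the fundamental theorem of calculus applies.
-/

open Real Set MeasureTheory intervalIntegral

theorem HasDerivAt.arcsin {f : ℝ → ℝ} {f' x : ℝ} (hf : HasDerivAt f f' x)
    (hx : f x ^ 2 < 1) :
    HasDerivAt (fun y => arcsin (f y)) (f' / √(1 - f x ^ 2)) x := by
  obtain ⟨h₁, h₂⟩ := abs_lt.mp ((sq_lt_one_iff_abs_lt_one (f x)).mp hx)
  simpa [Function.comp_def, div_eq_inv_mul] using (hasDerivAt_arcsin h₁.ne' h₂.ne).comp x hf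

theorem hasDerivAt_sqrt_sub_sq {r t : ℝ} (ht : t ^ 2 < r) :
    HasDerivAt (fun x => √(r - x ^ 2)) (-t / √(r - t ^ 2)) t := by
  have h := ((hasDerivAt_pow 2 t).const_sub r).sqrt (sub_pos.2 ht).ne'
  convert h using 1
  field_simp
  ring

theorem hasDerivAt_log_one_add_div_one_sub {t : ℝ} (ht : t ^ 2 < 1) :
    HasDerivAt (fun x => log ((1 + x) / (1 - x))) (2 / (1 - t ^ 2)) t := by
  obtain ⟨h₁, h₂⟩ := abs_lt.mp ((sq_lt_one_iff_abs_lt_one t).mp ht)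
  have hplus : 0 < 1 + t := by linarith
  have hminus : 0 < 1 - t := by linarith
  have h := (((hasDerivAt_id' (x := t)).const_add 1).fun_div
    ((hasDerivAt_id' (x := t)).const_sub 1) hminus.ne').log (div_pos hplus hminus).ne'
  have h₃ : 1 - t ^ 2 ≠ 0 := (sub_pos.2 ht).ne'
  refine h.congr_deriv ?_
  field_simp
  ring

theorem hasDerivAt_arcsin_div {a t : ℝ} (ha : 0 < a) (ht : t ^ 2 < a ^ 2) :
    HasDerivAt (fun x => arcsin (x / a)) (1 / √(a ^ 2 - t ^ 2)) t := by
  have hsq : (t / a) ^ 2 < 1 := by rwa [div_pow, div_lt_one (by positivity)]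
  have h := ((hasDerivAt_id' (x := t)).div_const a).arcsin hsq
  have hroot : √(1 - (t / a) ^ 2) = √(a ^ 2 - t ^ 2) / a := by
    rw [show 1 - (t / a) ^ 2 = (a ^ 2 - t ^ 2) / a ^ 2 by field_simp,
      sqrt_div' _ (sq_nonneg a), sqrt_sq ha.le]
  refine h.congr_deriv ?_
  rw [hroot]
  have : 0 < √(a ^ 2 - t ^ 2) := sqrt_pos.2 (sub_pos.2 ht)
  field_simp

theorem hasDerivAt_arcsin_mul_div_mul_sqrt {a c t : ℝ} (ha : 0 < a) (hac : a ^ 2 + c ^ 2 = 1)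
    (ht : t ^ 2 < a ^ 2) :
    HasDerivAt (fun x => arcsin (c * x / (a * √(1 - x ^ 2))))
      (c / ((1 - t ^ 2) * √(a ^ 2 - t ^ 2))) t := by
  have ht1 : t ^ 2 < 1 := by nlinarith
  set u := √(1 - t ^ 2) with hu
  set s := √(a ^ 2 - t ^ 2)
  have hu0 : 0 < u := sqrt_pos.2 (sub_pos.2 ht1)
  have hs0 : 0 < s := sqrt_pos.2 (sub_pos.2 ht)
  have hu2 : u ^ 2 = 1 - t ^ 2 := sq_sqrt (sub_pos.2 ht1).le
  have hs2 : s ^ 2 = a ^ 2 - t ^ 2 := sq_sqrt (sub_pos.2 ht).le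
  have hsum : (a * u) ^ 2 - (c * t) ^ 2 = s ^ 2 := by
    rw [mul_pow, mul_pow, hu2, hs2]; linear_combination (-t ^ 2) * hac
  have hau : 0 < a * u := mul_pos ha hu0
  have harg : (c * t / (a * u)) ^ 2 < 1 := by
    rw [div_pow, div_lt_one (by positivity)]; nlinarith
  have hroot : √(1 - (c * t / (a * u)) ^ 2) = s / (a * u) := by
    rw [show 1 - (c * t / (a * u)) ^ 2 = s ^ 2 / (a * u) ^ 2 by field_simp; linarith,
      sqrt_div' _ (sq_nonneg _), sqrt_sq hs0.le, sqrt_sq hau.le]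
  have h := (((hasDerivAt_id' (x := t)).const_mul c).fun_div
    ((hasDerivAt_sqrt_sub_sq ht1).const_mul a) hau.ne').arcsin harg
  rw [← hu, hroot] at h
  refine h.congr_deriv ?_
  rw [← hu2]
  field_simp
  linear_combination c * hu2

noncomputable def arcticAntideriv (a t : ℝ) : ℝ :=
  -√(a ^ 2 - t ^ 2) * log ((1 + t) / (1 - t)) + 2 * arcsin (t / a)
    - 2 * √(1 - a ^ 2) * arcsin (√(1 - a ^ 2) * t / (a * √(1 - t ^ 2)))

theorem hasDerivAt_arcticAntideriv {a t : ℝ} (ha : 0 < a) (ha1 : a < 1) (ht : t ^ 2 < a ^ 2) :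
    HasDerivAt (arcticAntideriv a) (t * log ((1 + t) / (1 - t)) / √(a ^ 2 - t ^ 2)) t := by
  set c := √(1 - a ^ 2)
  have hc2 : c ^ 2 = 1 - a ^ 2 := sq_sqrt (by nlinarith)
  have hs2 : √(a ^ 2 - t ^ 2) ^ 2 = a ^ 2 - t ^ 2 := sq_sqrt (sub_pos.2 ht).le
  have hs0 : 0 < √(a ^ 2 - t ^ 2) := sqrt_pos.2 (sub_pos.2 ht)
  have ht1 : 1 - t ^ 2 ≠ 0 := by nlinarith
  have h := (((hasDerivAt_sqrt_sub_sq ht).neg.mul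
    (hasDerivAt_log_one_add_div_one_sub (by nlinarith))).add
    ((hasDerivAt_arcsin_div ha ht).const_mul 2)).sub
    ((hasDerivAt_arcsin_mul_div_mul_sqrt (c := c) ha (by linarith) ht).const_mul (2 * c))
  -- the non-logarithmic terms cancel because `(a² - t²) + c² = 1 - t²`
  refine h.congr_deriv ?_
  simp only [Pi.neg_apply]
  field_simp
  linear_combination (-2) * hs2 - 2 * hc2

theorem continuousOn_arcticAntideriv {a : ℝ} (ha : 0 < a) (ha1 : a < 1) :
    ContinuousOn (arcticAntideriv a) (Icc (-a) a) := by
  have hpos : ∀ t ∈ Icc (-a) a, 0 < 1 + t ∧ 0 < 1 - t := fun t ht =>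
    ⟨by linarith [ht.1], by linarith [ht.2]⟩
  have hlog : ContinuousOn (fun t => log ((1 + t) / (1 - t))) (Icc (-a) a) :=
    ((continuousOn_const.add continuousOn_id).div (continuousOn_const.sub continuousOn_id)
      fun t ht => (hpos t ht).2.ne').log fun t ht => (div_pos (hpos t ht).1 (hpos t ht).2).ne'
  have hquot : ContinuousOn (fun t => √(1 - a ^ 2) * t / (a * √(1 - t ^ 2))) (Icc (-a) a) :=
    (continuousOn_const.mul continuousOn_id).div (by fun_prop) fun t ht =>
      (mul_pos ha (sqrt_pos.2 (by nlinarith [hpos t ht]))).ne'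
  unfold arcticAntideriv
  fun_prop

theorem arcticAntideriv_neg (a t : ℝ) : arcticAntideriv a (-t) = -arcticAntideriv a t := by
  have hlog : log ((1 + -t) / (1 - -t)) = -log ((1 + t) / (1 - t)) := by
    rw [← log_inv, inv_div, sub_neg_eq_add, ← sub_eq_add_neg]
  simp only [arcticAntideriv, hlog, neg_sq, neg_div, mul_neg, arcsin_neg]
  ring

theorem arcticAntideriv_self {a : ℝ} (ha : 0 < a) (ha1 : a < 1) :
    arcticAntideriv a a = π * (1 - √(1 - a ^ 2)) := by
  have hc : 0 < √(1 - a ^ 2) := sqrt_pos.2 (by nlinarith)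
  have hone : √(1 - a ^ 2) * a / (a * √(1 - a ^ 2)) = 1 := by
    rw [mul_comm a]; exact div_self (mul_pos hc ha).ne'
  simp only [arcticAntideriv, sub_self, sqrt_zero, div_self ha.ne', hone, arcsin_one]
  ring

theorem mul_log_one_add_div_one_sub_nonneg {t : ℝ} (ht : t ^ 2 < 1) :
    0 ≤ t * log ((1 + t) / (1 - t)) := by
  obtain ⟨h₁', h₂'⟩ := abs_lt.mp ((sq_lt_one_iff_abs_lt_one t).mp ht)
  have h₁ : 0 < 1 + t := by linarith
  have h₂ : 0 < 1 - t := by linarith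
  rcases le_total 0 t with h | h
  · exact mul_nonneg h (log_nonneg ((one_le_div h₂).2 (by linarith)))
  · exact mul_nonneg_of_nonpos_of_nonpos h
      (log_nonpos (div_pos h₁ h₂).le ((div_le_one h₂).2 (by linarith)))

/-- For every real `a` with `0 < a < 1`,
`∫_{-a}^{a} t log((1+t)/(1-t))/√(a²-t²) dt = 2π(1 - √(1-a²))`. -/
theorem stmt_19 (a : ℝ) (ha0 : 0 < a) (ha : a < 1) :
    ∫ t in (-a)..a, t * Real.log ((1 + t) / (1 - t)) / Real.sqrt (a ^ 2 - t ^ 2)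
      = 2 * Real.pi * (1 - Real.sqrt (1 - a ^ 2)) := by
  have hle : -a ≤ a := by linarith
  have hcont := continuousOn_arcticAntideriv ha0 ha
  have hderiv : ∀ t ∈ Ioo (-a) a, HasDerivAt (arcticAntideriv a)
      (t * log ((1 + t) / (1 - t)) / √(a ^ 2 - t ^ 2)) t := fun t ht =>
    hasDerivAt_arcticAntideriv ha0 ha (sq_lt_sq' ht.1 ht.2)
  have hint : IntervalIntegrable (fun t => t * log ((1 + t) / (1 - t)) / √(a ^ 2 - t ^ 2))
      volume (-a) a := by
    refine intervalIntegrable_deriv_of_nonneg (by rwa [uIcc_of_le hle])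
      (by rwa [min_eq_left hle, max_eq_right hle]) ?_
    rw [min_eq_left hle, max_eq_right hle]
    exact fun t ht => div_nonneg
      (mul_log_one_add_div_one_sub_nonneg (by nlinarith [ht.1, ht.2])) (sqrt_nonneg _)
  rw [integral_eq_sub_of_hasDerivAt_of_le hle hcont hderiv hint, arcticAntideriv_neg,
    arcticAntideriv_self ha0 ha]
  ring
end
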